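/- arXiv:2503.12995 — 8 statements merged into one kernel-verified Lean document; each statement's English description precedes it below -/
import Mathlib

section
/- Let R be an integral domain, p ≥ 2 an integer, and let c, d be distinct nonzero elements of R. Then the only Hahn series f over R with value group ℚ satisfying c·φ_p(f) = d·f is f = 0. -/
/-- Let `R` be an integral domain, `p ≥ 2`, and `c ≠ d` nonzero elements of `R`.
Then the only Hahn series `f` over `R` (value group `ℚ`) with `c • φ_p f = d • f`
is `f = 0`, where `φ_p` is the exponent-rescaling map `(φ_p f).coeff γ = f.coeff (γ/p)`. -/
theorem eq_zero_of_smul_phi_eq_smul (p : ℕ) (hp : 2 ≤ p) (R : Type*) [CommRing R] [IsDomain R]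
    (φ : HahnSeries ℚ R → HahnSeries ℚ R)
    (hφ : ∀ (f : HahnSeries ℚ R) (γ : ℚ), (φ f).coeff γ = f.coeff (γ / p))
    (c d : R) (hc : c ≠ 0) (hd : d ≠ 0) (hcd : c ≠ d)
    (f : HahnSeries ℚ R) (hf : c • φ f = d • f) :
    f = 0 := by
  have hp1 : (1:ℚ) < p := by exact_mod_cast hp.trans_lt' one_lt_two
  have hp0 : (0:ℚ) < p := by linarith
  have key : ∀ γ : ℚ, c * f.coeff (γ / p) = d * f.coeff γ := by
    intro γ
    have := congrArg (fun g => g.coeff γ) hf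
    simpa [hφ] using this
  have mem_iff : ∀ γ : ℚ, f.coeff γ ≠ 0 ↔ f.coeff (γ / p) ≠ 0 := by
    intro γ
    constructor
    · intro h h'
      apply h
      have hk := key γ
      rw [h', mul_zero] at hk
      exact (mul_eq_zero.mp hk.symm).resolve_left hd
    · intro h h'
      apply h
      have hk := key γ
      rw [h', mul_zero] at hk
      exact (mul_eq_zero.mp hk).resolve_left hc
  have hsupp : ∀ γ : ℚ, γ ≠ 0 → f.coeff γ = 0 := by
    intro γ hγ
    by_contra h
    rcases lt_or_gt_of_ne hγ with hneg | hpos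
    · -- γ < 0: sequence n ↦ γ * p^n is strictly decreasing in support
      have hmem : ∀ n : ℕ, f.coeff (γ * (p:ℚ) ^ n) ≠ 0 := by
        intro n
        induction n with
        | zero => simpa using h
        | succ n ih =>
          apply (mem_iff (γ * (p:ℚ) ^ (n+1))).mpr
          have he : γ * (p:ℚ) ^ (n+1) / p = γ * (p:ℚ) ^ n := by
            field_simp
            ring
          rw [he]; exact ih
      have hanti : StrictAnti (fun n : ℕ => γ * (p:ℚ) ^ n) := by
        intro m n hmn
        have h1 := pow_lt_pow_right₀ hp1 hmn
        simpa using mul_lt_mul_of_neg_left h1 hneg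
      exact (Set.isWF_iff_no_descending_seq.mp f.isPWO_support.isWF)
        (fun n => γ * (p:ℚ) ^ n) hanti (fun n => hmem n)
    · -- γ > 0: sequence n ↦ γ / p^n is strictly decreasing in support
      have hmem : ∀ n : ℕ, f.coeff (γ / (p:ℚ) ^ n) ≠ 0 := by
        intro n
        induction n with
        | zero => simpa using h
        | succ n ih =>
          have he : γ / (p:ℚ) ^ (n+1) = (γ / (p:ℚ) ^ n) / p := by
            rw [div_div, pow_succ]
          rw [he]
          exact (mem_iff (γ / (p:ℚ) ^ n)).mp ih
      have hanti : StrictAnti (fun n : ℕ => γ / (p:ℚ) ^ n) := by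
        intro m n hmn
        have h1 := pow_lt_pow_right₀ hp1 hmn
        have h2 := pow_pos hp0 m
        have h3 := pow_pos hp0 n
        rw [div_lt_div_iff₀ h3 h2]
        nlinarith
      exact (Set.isWF_iff_no_descending_seq.mp f.isPWO_support.isWF)
        (fun n => γ / (p:ℚ) ^ n) hanti (fun n => hmem n)
  have h0 : f.coeff 0 = 0 := by
    have hk := key 0
    rw [zero_div] at hk
    have : (c - d) * f.coeff 0 = 0 := by rw [sub_mul, hk, sub_self]
    exact (mul_eq_zero.mp this).resolve_left (sub_ne_zero.mpr hcd)
  ext γ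
  rcases eq_or_ne γ 0 with rfl | hγ
  · simpa using h0
  · simpa using hsupp γ hγ
end

section
/- Let p ≥ 2 be an integer and let f be a Hahn series over a ring R with value group ℚ satisfying φ_p(f) = u·f for some unit u of R. Then the support of f is contained in {0}, i.e. f is a constant. -/
/-- Let `p ≥ 2` and let `f` be a Hahn series over a ring `R` (value group `ℚ`) satisfying
`φ_p f = u • f` for some unit `u` of `R`. Then the support of `f` is contained in `{0}`,
i.e. `f` is a constant. Here `φ_p` is the exponent-rescaling map
`(φ_p f).coeff γ = f.coeff (γ/p)`. -/
theorem support_subset_singleton_zero_of_phi_eq_unit_smul (p : ℕ) (hp : 2 ≤ p)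
    (R : Type*) [Ring R]
    (φ : HahnSeries ℚ R → HahnSeries ℚ R)
    (hφ : ∀ (f : HahnSeries ℚ R) (γ : ℚ), (φ f).coeff γ = f.coeff (γ / p))
    (u : Rˣ) (f : HahnSeries ℚ R) (hf : φ f = (u : R) • f) :
    f.support ⊆ {0} := by
  have hp1 : (1 : ℚ) < (p : ℚ) := by exact_mod_cast hp.trans_lt' one_lt_two
  have hp0 : (0 : ℚ) < (p : ℚ) := lt_trans one_pos hp1
  have key : ∀ δ : ℚ, f.coeff (δ / p) = (u : R) * f.coeff δ := by
    intro δ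
    have h1 := hφ f δ
    rw [hf] at h1
    simpa [HahnSeries.coeff_smul] using h1.symm
  intro γ hγ
  by_contra hne
  simp only [Set.mem_singleton_iff] at hne
  have hγc : f.coeff γ ≠ 0 := hγ
  have hWF := f.isWF_support
  rw [Set.isWF_iff_no_descending_seq] at hWF
  rcases lt_or_gt_of_ne hne with hneg | hpos
  · -- γ < 0 : use p^n * γ, strictly decreasing
    refine hWF (fun n => (p : ℚ) ^ n * γ) ?_ ?_
    · intro m n hmn
      have h : ((p : ℚ) ^ m) * (-γ) < ((p : ℚ) ^ n) * (-γ) :=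
        mul_lt_mul_of_pos_right (pow_lt_pow_right₀ hp1 hmn) (by linarith)
      simp only
      nlinarith [h]
    · intro n
      induction n with
      | zero =>
        show f.coeff ((p:ℚ) ^ (0:ℕ) * γ) ≠ 0
        rw [pow_zero, one_mul]; exact hγc
      | succ k ih =>
        have ih' : f.coeff ((p:ℚ) ^ k * γ) ≠ 0 := ih
        show f.coeff ((p:ℚ) ^ (k+1) * γ) ≠ 0
        have hdiv : ((p : ℚ) ^ (k + 1) * γ) / p = (p : ℚ) ^ k * γ := by
          rw [pow_succ, mul_comm ((p:ℚ)^k) (p:ℚ), mul_assoc,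
            mul_div_cancel_left₀ _ hp0.ne']
        have hk := key ((p : ℚ) ^ (k + 1) * γ)
        rw [hdiv] at hk
        intro h0
        apply ih'
        simpa [h0] using hk
  · -- γ > 0 : use γ / p^n, strictly decreasing
    refine hWF (fun n => γ / (p : ℚ) ^ n) ?_ ?_
    · intro m n hmn
      simp only
      exact div_lt_div_of_pos_left hpos (pow_pos hp0 m) (pow_lt_pow_right₀ hp1 hmn)
    · intro n
      induction n with
      | zero =>
        show f.coeff (γ / (p:ℚ) ^ (0:ℕ)) ≠ 0
        rw [pow_zero, div_one]; exact hγc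
      | succ k ih =>
        have ih' : f.coeff (γ / (p:ℚ) ^ k) ≠ 0 := ih
        show f.coeff (γ / (p:ℚ) ^ (k+1)) ≠ 0
        have hdiv : γ / (p : ℚ) ^ (k + 1) = (γ / (p : ℚ) ^ k) / p := by
          rw [div_div, pow_succ]
        have hk := key (γ / (p : ℚ) ^ k)
        rw [← hdiv] at hk
        rw [hk]
        intro h0
        apply ih'
        have h2 : ((u⁻¹ : Rˣ) : R) * ((u : R) * f.coeff (γ / (p:ℚ) ^ k)) = 0 := by
          rw [h0, mul_zero]
        rwa [← mul_assoc, Units.inv_mul, one_mul] at h2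
end

section
/- Let p ≥ 2 and let g be a Hahn series over a field K with value group ℚ whose support is contained in the negative rationals. Then the family (φ_p^k(g))_{k ≤ −1} is summable: the union of the supports of the φ_p^k(g) for k ≤ −1 is well-ordered, and each γ ∈ ℚ lies in the support of only finitely many φ_p^k(g). -/
/-- Let `p ≥ 2` and let `g` be a Hahn series over a field `K` (value group `ℚ`) whose
support is contained in the negative rationals. Then the family `(φ_p^k g)_{k ≤ -1}` is
summable: the union of the supports is well-ordered and each `γ` lies in the support of
only finitely many members. Here `F k = φ_p^k g` is characterized by
`(F k).coeff γ = g.coeff (γ / p^k)`. -/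
theorem summable_family_of_neg_support (p : ℕ) (hp : 2 ≤ p) (K : Type*) [Field K]
    (g : HahnSeries ℚ K) (hg : g.support ⊆ {γ : ℚ | γ < 0})
    (F : ℤ → HahnSeries ℚ K)
    (hF : ∀ (k : ℤ) (γ : ℚ), (F k).coeff γ = g.coeff (γ / (p : ℚ) ^ k)) :
    (⋃ k ∈ {k : ℤ | k ≤ -1}, (F k).support).IsWF ∧
      ∀ γ : ℚ, {k : ℤ | k ≤ -1 ∧ γ ∈ (F k).support}.Finite := by
  classical
  have hp1 : (1:ℚ) < (p:ℚ) := by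
    have : (2:ℚ) ≤ (p:ℚ) := by exact_mod_cast hp
    linarith
  have hp0 : (0:ℚ) < (p:ℚ) := lt_trans one_pos hp1
  have hpk : ∀ k : ℤ, (0:ℚ) < (p:ℚ)^k := fun k => zpow_pos hp0 k
  have hmem : ∀ (k : ℤ) (γ : ℚ), γ ∈ (F k).support ↔ γ / (p:ℚ)^k ∈ g.support := by
    intro k γ
    simp [HahnSeries.mem_support, hF]
  by_cases hne : g.support.Nonempty
  · set γ₀ := g.isWF_support.min hne with hγ₀def
    have hγ₀min : ∀ γ ∈ g.support, γ₀ ≤ γ := fun γ h => g.isWF_support.min_le hne h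
    -- membership in support forces negativity
    have hneg : ∀ (k : ℤ) (γ : ℚ), γ ∈ (F k).support → γ < 0 := by
      intro k γ h
      have h1 : γ / (p:ℚ)^k ∈ g.support := (hmem k γ).1 h
      have h2 : γ / (p:ℚ)^k < 0 := hg h1
      have := (div_neg_iff.1 h2)
      rcases this with ⟨_, h3⟩ | ⟨h3, _⟩
      · exact absurd h3 (not_lt.2 (hpk k).le)
      · exact h3
    -- key bound
    have key : ∀ (c : ℚ), c < 0 → ∀ (N : ℕ), c * (p:ℚ)^(N:ℤ) < γ₀ →
        ∀ (k : ℤ), ∀ γ, γ ∈ (F k).support → γ ≤ c → -(N:ℤ) < k := by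
      intro c hc N hN k γ hγ hγc
      have h1 : γ / (p:ℚ)^k ∈ g.support := (hmem k γ).1 hγ
      have h2 : γ₀ ≤ γ / (p:ℚ)^k := hγ₀min _ h1
      have h3 : γ / (p:ℚ)^k = γ * (p:ℚ)^(-k) := by
        rw [zpow_neg, div_eq_mul_inv]
      have h4 : γ * (p:ℚ)^(-k) ≤ c * (p:ℚ)^(-k) :=
        mul_le_mul_of_nonneg_right hγc (hpk (-k)).le
      have h5 : c * (p:ℚ)^(N:ℤ) < c * (p:ℚ)^(-k) := by
        calc c * (p:ℚ)^(N:ℤ) < γ₀ := hN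
        _ ≤ γ * (p:ℚ)^(-k) := h3 ▸ h2
        _ ≤ c * (p:ℚ)^(-k) := h4
      have h6 : (p:ℚ)^(-k) < (p:ℚ)^(N:ℤ) := by
        by_contra hcon
        push_neg at hcon
        have := mul_le_mul_of_nonpos_left hcon hc.le
        linarith
      have h7 : -k < (N:ℤ) := (zpow_lt_zpow_iff_right₀ hp1).1 h6
      linarith
    have getN : ∀ c : ℚ, c < 0 → ∃ N : ℕ, c * (p:ℚ)^(N:ℤ) < γ₀ := by
      intro c hc
      obtain ⟨N, hN⟩ := pow_unbounded_of_one_lt (γ₀ / c) hp1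
      refine ⟨N, ?_⟩
      rw [div_lt_iff_of_neg hc] at hN
      rw [mul_comm] at hN
      rwa [zpow_natCast]
    constructor
    · rw [Set.isWF_iff_no_descending_seq]
      intro f hf hfmem
      -- extract indices
      have hk : ∀ n : ℕ, ∃ k : ℤ, k ≤ -1 ∧ f n ∈ (F k).support := by
        intro n
        have := hfmem n
        simp only [Set.mem_iUnion, Set.mem_setOf_eq] at this
        obtain ⟨k, hk1, hk2⟩ := this
        exact ⟨k, hk1, hk2⟩
      choose k hk1 hk2 using hk
      have hf0 : f 0 < 0 := hneg _ _ (hk2 0)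
      obtain ⟨N, hN⟩ := getN (f 0) hf0
      have hkmem : ∀ n, k n ∈ Set.Icc (-(N:ℤ)) (-1) := by
        intro n
        refine ⟨(key (f 0) hf0 N hN (k n) (f n) (hk2 n) (hf.antitone (Nat.zero_le n))).le, hk1 n⟩
      haveI : Finite ↑(Set.Icc (-(N:ℤ)) (-1)) := (Set.finite_Icc _ _).to_subtype
      obtain ⟨y, hy⟩ := Finite.exists_infinite_fiber (fun n => (⟨k n, hkmem n⟩ : Set.Icc (-(N:ℤ)) (-1)))
      have hyinf : {n : ℕ | k n = (y : ℤ)}.Infinite := by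
        have h2 : ((fun n => (⟨k n, hkmem n⟩ : Set.Icc (-(N:ℤ)) (-1))) ⁻¹' {y}).Infinite :=
          Set.infinite_coe_iff.1 hy
        refine h2.mono ?_
        intro n hn
        simp only [Set.mem_preimage, Set.mem_singleton_iff] at hn
        simpa [Set.mem_setOf_eq] using congrArg Subtype.val hn
      set s : Set ℕ := {n : ℕ | k n = (y : ℤ)} with hs
      haveI : Infinite ↑s := Set.infinite_coe_iff.2 hyinf
      let e := Nat.orderEmbeddingOfSet s
      have hemem : ∀ n, e n ∈ s := by
        intro n
        have : e n ∈ Set.range e := Set.mem_range_self n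
        rwa [Nat.orderEmbeddingOfSet_range] at this
      have hdesc : StrictAnti (fun n => f (e n)) := fun a b h => hf (e.strictMono h)
      have hsupp : ∀ n, f (e n) ∈ (F (y:ℤ)).support := by
        intro n
        have := hk2 (e n)
        rwa [hemem n] at this
      have := Set.isWF_iff_no_descending_seq.1 (F (y:ℤ)).isWF_support
      exact this _ hdesc hsupp
    · intro γ
      by_cases hγneg : γ < 0
      · obtain ⟨N, hN⟩ := getN γ hγneg
        apply Set.Finite.subset (Set.finite_Icc (-(N:ℤ)) (-1))
        rintro k ⟨hk1, hk2⟩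
        exact ⟨(key γ hγneg N hN k γ hk2 le_rfl).le, hk1⟩
      · apply Set.Finite.subset Set.finite_empty
        rintro k ⟨-, hk⟩
        exact absurd (hneg k γ hk) hγneg
  · have hempty : ∀ k, (F k).support = ∅ := by
      intro k
      ext γ
      simp only [Set.mem_empty_iff_false, iff_false]
      intro h
      exact hne ⟨_, (hmem k γ).1 h⟩
    constructor
    · have h : (⋃ k ∈ {k : ℤ | k ≤ -1}, (F k).support) = ∅ := by simp [hempty]
      rw [h]; exact Set.isWF_empty
    · intro γ
      apply Set.Finite.subset Set.finite_empty
      rintro k ⟨-, hk⟩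
      rw [hempty] at hk; exact hk
end

section
/- Let p ≥ 2 and let g be a Hahn series over a field K with value group ℚ whose support is contained in the positive rationals. Then the family (φ_p^k(g))_{k ≥ 0} is summable. -/
/-!
If `m > 0` bounds the support of `g` from below, then `γ ∈ supp (φ_p^k g)` forces
`p^k m ≤ γ`, hence `k m < γ` because `k < 2^k ≤ p^k`. So below any bound only finitely many
of the supports occur, which gives both finiteness and, since each support is well-ordered,
well-orderedness of their union.
-/

open Set

theorem Set.isWF_biUnion_of_finite_inter_Iic_nonempty {ι α : Type*} [LinearOrder α]
    {s : Set ι} {T : ι → Set α} (hT : ∀ i ∈ s, (T i).IsWF)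
    (hfin : ∀ b, {i ∈ s | (T i ∩ Iic b).Nonempty}.Finite) : (⋃ i ∈ s, T i).IsWF := by
  rw [isWF_iff_no_descending_seq]
  intro f hf hmem
  have hwf : (⋃ i ∈ (hfin (f 0)).toFinset, T i).IsWF :=
    (Finset.isWF_bUnion _).2 fun i hi => hT i ((hfin _).mem_toFinset.1 hi).1
  refine isWF_iff_no_descending_seq.1 hwf f hf fun n => ?_
  obtain ⟨i, hi, hx⟩ := mem_iUnion₂.1 (hmem n)
  exact mem_iUnion₂.2
    ⟨i, (hfin _).mem_toFinset.2 ⟨hi, f n, hx, hf.antitone (Nat.zero_le n)⟩, hx⟩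

theorem Set.IsWF.exists_pos_le {α : Type*} [LinearOrder α] [Zero α] [NoMaxOrder α]
    {S : Set α} (hS : S.IsWF) (hpos : S ⊆ Ioi 0) : ∃ m > 0, ∀ x ∈ S, m ≤ x := by
  rcases S.eq_empty_or_nonempty with rfl | hne
  · obtain ⟨m, hm⟩ := exists_gt (0 : α)
    exact ⟨m, hm, fun _ hx => hx.elim⟩
  · exact ⟨hS.min hne, hpos (hS.min_mem hne), fun _ hx => hS.min_le hne hx⟩

section OrderedField

variable {α : Type*} [Field α] [LinearOrder α] [IsStrictOrderedRing α]

theorem intCast_lt_zpow {a : α} (ha : 2 ≤ a) {k : ℤ} (hk : 0 ≤ k) : (k : α) < a ^ k := by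
  lift k to ℕ using hk
  calc ((k : ℤ) : α) = (k : α) := Int.cast_natCast k
    _ < 2 ^ k := by exact_mod_cast k.lt_two_pow_self
    _ ≤ a ^ k := pow_le_pow_left₀ zero_le_two ha k
    _ = a ^ (k : ℤ) := (zpow_natCast a k).symm

theorem intCast_lt_div_of_le_div_zpow {a m γ : α} (ha : 2 ≤ a) (hm : 0 < m) {k : ℤ}
    (hk : 0 ≤ k) (hle : m ≤ γ / a ^ k) : (k : α) < γ / m := by
  have hak : 0 < a ^ k := zpow_pos (zero_lt_two.trans_le ha) k
  calc (k : α) < a ^ k := intCast_lt_zpow ha hk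
    _ ≤ γ / m := by rw [le_div_iff₀ hm, mul_comm]; exact (le_div_iff₀ hak).1 hle

theorem finite_setOf_nonneg_intCast_lt [FloorRing α] (C : α) :
    {k : ℤ | 0 ≤ k ∧ (k : α) < C}.Finite :=
  (finite_Icc 0 ⌈C⌉).subset fun _ ⟨hk, hkC⟩ =>
    ⟨hk, Int.cast_le.1 (hkC.le.trans (Int.le_ceil C))⟩

end OrderedField

/-- Let `p ≥ 2` and let `g` be a Hahn series over a field `K` (value group `ℚ`) whose
support is contained in the positive rationals. Then the family `(φ_p^k g)_{k ≥ 0}` is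
summable: the union of the supports is well-ordered and each `γ` lies in the support of
only finitely many members. Here `F k = φ_p^k g` is characterized by
`(F k).coeff γ = g.coeff (γ / p^k)`. -/
theorem summable_family_of_pos_support (p : ℕ) (hp : 2 ≤ p) (K : Type*) [Field K]
    (g : HahnSeries ℚ K) (hg : g.support ⊆ {γ : ℚ | 0 < γ})
    (F : ℤ → HahnSeries ℚ K)
    (hF : ∀ (k : ℤ) (γ : ℚ), (F k).coeff γ = g.coeff (γ / (p : ℚ) ^ k)) :
    (⋃ k ∈ {k : ℤ | 0 ≤ k}, (F k).support).IsWF ∧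
      ∀ γ : ℚ, {k : ℤ | 0 ≤ k ∧ γ ∈ (F k).support}.Finite := by
  obtain ⟨m, hm, hmle⟩ := g.isWF_support.exists_pos_le hg
  have key : ∀ k γ, 0 ≤ k → γ ∈ (F k).support → (k : ℚ) < γ / m := fun k γ hk hγ =>
    intCast_lt_div_of_le_div_zpow (a := (p : ℚ)) (by exact_mod_cast hp) hm hk
      (hmle _ (by rwa [HahnSeries.mem_support, hF] at hγ))
  refine ⟨isWF_biUnion_of_finite_inter_Iic_nonempty (fun k _ => (F k).isWF_support)
    fun b => ?_, fun γ => ?_⟩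
  · refine (finite_setOf_nonneg_intCast_lt (b / m)).subset ?_
    rintro k ⟨hk, γ, hγ, hγb⟩
    exact ⟨hk, (key k γ hk hγ).trans_le (div_le_div_of_nonneg_right hγb hm.le)⟩
  · exact (finite_setOf_nonneg_intCast_lt (γ / m)).subset fun k ⟨hk, hγ⟩ =>
      ⟨hk, key k γ hk hγ⟩
end

section
/- For every Hahn series g over ℂ(λ) with value group ℚ, there exists a unique Hahn series f over ℂ(λ) with value group ℚ such that λ·φ_p(f) − f = g. Moreover, if g = g_- + g_0 + g_+ with supp(g_-) ⊂ ℚ_{<0}, g_0 ∈ ℂ(λ) the constant coefficient, and supp(g_+) ⊂ ℚ_{>0}, then f = Σ_{k ≤ −1} λ^k φ_p^k(g_-) + g_0/(λ−1) − Σ_{k ≥ 0} λ^k φ_p^k(g_+). -/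
/-!
Coefficientwise, `λ φ_p f - f = g` is the recursion `λ f_{γ/p} - f_γ = g_γ`. At `γ = 0` it gives
`f_0 = g_0 / (λ - 1)`. For `γ ≠ 0` it is unwound along the orbit `γ p^n` (if `γ < 0`) or
`γ p^{-n}` (if `γ > 0`); this orbit is strictly decreasing, so it meets the well-founded support
of `g` only finitely often and the resulting geometric series in `λ^{∓1}` are finite sums.
The union of all rescaled supports is the image of `supp g × ℕ` under a monotone map, hence
partially well-ordered, so these coefficients form a Hahn series. For uniqueness, a solution of
the homogeneous equation is geometric along the same orbits and vanishes somewhere on each,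
hence everywhere.
-/

open Function Set

lemma Set.IsWF.finite_setOf_mem_of_strictAnti {α : Type*} [Preorder α] {S : Set α}
    (hS : S.IsWF) {u : ℕ → α} (hu : StrictAnti u) : {n | u n ∈ S}.Finite := by
  by_contra h
  exact isWF_iff_no_descending_seq.1 hS _ (hu.comp_strictMono (Nat.nth_strictMono h))
    fun n => Nat.nth_mem_of_infinite h n

lemma Set.IsPWO.iUnion_image_mul_pow {R : Type*} [Semiring R] [PartialOrder R]
    [IsOrderedRing R] {S : Set R} (hS : S.IsPWO) {u : R} (hu : 0 ≤ u)
    (hmono : ∀ s ∈ S, Monotone fun n : ℕ => s * u ^ n) :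
    (⋃ n : ℕ, (· * u ^ n) '' S).IsPWO := by
  have hunion :
      (⋃ n : ℕ, (· * u ^ n) '' S) = (fun x : R × ℕ => x.1 * u ^ x.2) '' (S ×ˢ univ) := by
    ext; simp [and_comm, exists_comm]
  rw [hunion]
  refine (hS.prod (isPWO_of_wellQuasiOrderedLE _)).image_of_monotoneOn ?_
  rintro ⟨s, m⟩ - ⟨t, n⟩ ⟨ht, -⟩ ⟨hst, hmn⟩
  exact (mul_le_mul_of_nonneg_right hst (pow_nonneg hu m)).trans (hmono t ht hmn)

lemma finsum_eq_zero_add {M : Type*} [AddCommMonoid M] {f : ℕ → M} (hf : (support f).Finite) :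
    ∑ᶠ n, f n = f 0 + ∑ᶠ n, f (n + 1) := by
  obtain ⟨N, hN⟩ := hf.bddAbove
  have hsupp : support f ⊆ Finset.range (N + 1) := fun n hn => by
    simpa [Nat.lt_succ_iff] using hN hn
  have hsupp_succ : support (fun n => f (n + 1)) ⊆ Finset.range N := fun n hn => by
    simpa [Nat.lt_succ_iff] using hN hn
  rw [finsum_eq_sum_of_support_subset _ hsupp, finsum_eq_sum_of_support_subset _ hsupp_succ,
    Finset.sum_range_succ', add_comm]

lemma finsum_int_le_neg_one {M : Type*} [AddCommMonoid M] (f : ℤ → M) :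
    ∑ᶠ k : {k : ℤ // k ≤ -1}, f k = ∑ᶠ n : ℕ, f (-(n + 1)) := by
  refine (finsum_eq_of_bijective (fun n : ℕ => (⟨-(n + 1), by omega⟩ : {k : ℤ // k ≤ -1}))
    ⟨fun m n h => ?_, ?_⟩ fun _ => rfl).symm
  · simpa using congrArg Subtype.val h
  · rintro ⟨k, hk⟩
    exact ⟨(-k - 1).toNat, Subtype.ext (by simp only; omega)⟩

lemma eq_zero_of_eq_mul_succ {M₀ : Type*} [MonoidWithZero M₀] {b : ℕ → M₀} {c : M₀}
    (hb : ∀ n, b n = c * b (n + 1)) {N : ℕ} (hN : b N = 0) : b 0 = 0 := by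
  have hpow : ∀ n, b 0 = c ^ n * b n := fun n => by
    induction n with
    | zero => simp
    | succ n ih => rw [ih, hb n, pow_succ, mul_assoc]
  rw [hpow N, hN, mul_zero]

section StrictAnti
variable {Γ : Type*} [Ring Γ] [PartialOrder Γ] [IsStrictOrderedRing Γ] {γ u : Γ}

lemma strictAnti_mul_pow_of_neg (hγ : γ < 0) (hu : 1 < u) : StrictAnti fun n : ℕ => γ * u ^ n :=
  fun _ _ hmn => mul_lt_mul_of_neg_left (pow_lt_pow_right₀ hu hmn) hγ

lemma strictAnti_mul_pow_of_pos (hγ : 0 < γ) (hu₀ : 0 < u) (hu₁ : u < 1) :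
    StrictAnti fun n : ℕ => γ * u ^ n :=
  fun _ _ hmn => mul_lt_mul_of_pos_left (pow_lt_pow_right_of_lt_one₀ hu₀ hu₁ hmn) hγ

end StrictAnti

lemma RatFunc.X_ne_one {K : Type*} [Field K] : (RatFunc.X : RatFunc K) ≠ 1 :=
  fun h => by simpa using congrArg RatFunc.intDegree h

namespace HahnSeries

section Coeff
variable {Γ R : Type*} [PartialOrder Γ] [Zero R]

lemma finite_setOf_coeff_ne_zero_of_strictAnti (a : HahnSeries Γ R) {u : ℕ → Γ}
    (hu : StrictAnti u) : {n | a.coeff (u n) ≠ 0}.Finite :=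
  a.isWF_support.finite_setOf_mem_of_strictAnti hu

lemma exists_coeff_eq_zero_of_strictAnti (a : HahnSeries Γ R) {u : ℕ → Γ}
    (hu : StrictAnti u) : ∃ n, a.coeff (u n) = 0 := by
  simpa using (a.finite_setOf_coeff_ne_zero_of_strictAnti hu).exists_notMem

end Coeff

variable {Γ K : Type*} [Field Γ] [LinearOrder Γ] [Field K]

noncomputable def geomCoeffSum (a : HahnSeries Γ K) (c : K) (u γ : Γ) : K :=
  ∑ᶠ n : ℕ, c ^ n * a.coeff (γ * u ^ n)

variable (a : HahnSeries Γ K) (c : K) {q γ : Γ}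

lemma geomCoeffSum_eq_add {u : Γ} (h : StrictAnti fun n : ℕ => γ * u ^ n) :
    a.geomCoeffSum c u γ = a.coeff γ + c * a.geomCoeffSum c u (γ * u) := by
  have hfin : (Function.support fun n => c ^ n * a.coeff (γ * u ^ n)).Finite :=
    (a.finite_setOf_coeff_ne_zero_of_strictAnti h).subset (support_mul_subset_right _ _)
  rw [geomCoeffSum, finsum_eq_zero_add hfin, geomCoeffSum, mul_finsum]
  simp only [pow_zero, mul_one, one_mul, pow_succ', mul_assoc]

lemma exists_coeff_ne_zero_of_geomCoeffSum_ne_zero {u : Γ} (h : a.geomCoeffSum c u γ ≠ 0) :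
    ∃ n, a.coeff (γ * u ^ n) ≠ 0 := by
  contrapose! h
  exact finsum_eq_zero_of_forall_eq_zero fun n => by rw [h n, mul_zero]

/- `f(x) ↦ f(x^q)` rescales exponents by `q`; unwinding `c f_{γ/q} - f_γ = a_γ` along the
decreasing orbits `γ q^n` (`γ < 0`) and `γ q^{-n}` (`γ > 0`) gives these geometric sums. -/
noncomputable def mahlerSolutionCoeff (q γ : Γ) : K :=
  if γ < 0 then c⁻¹ * a.geomCoeffSum c⁻¹ q (γ * q)
  else if 0 < γ then -a.geomCoeffSum c q⁻¹ γ
  else a.coeff 0 / (c - 1)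

variable [IsStrictOrderedRing Γ]

lemma isPWO_support_mahlerSolutionCoeff (hq : 1 < q) :
    (Function.support (a.mahlerSolutionCoeff c q)).IsPWO := by
  have hq0 : 0 < q := zero_lt_one.trans hq
  have hneg : (⋃ n : ℕ, (· * q⁻¹ ^ n) '' (a.support ∩ Iio 0)).IsPWO :=
    (a.isPWO_support.mono inter_subset_left).iUnion_image_mul_pow (inv_nonneg.2 hq0.le)
      fun s hs _ _ hmn => mul_le_mul_of_nonpos_left
        (pow_le_pow_of_le_one (inv_nonneg.2 hq0.le) (inv_le_one_of_one_le₀ hq.le) hmn) hs.2.le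
  have hpos : (⋃ n : ℕ, (· * q ^ n) '' (a.support ∩ Ioi 0)).IsPWO :=
    (a.isPWO_support.mono inter_subset_left).iUnion_image_mul_pow hq0.le
      fun s hs _ _ hmn => mul_le_mul_of_nonneg_left (pow_le_pow_right₀ hq.le hmn) hs.2.le
  refine (((isPWO_singleton 0).union hneg).union hpos).mono fun γ hγ => ?_
  rw [Function.mem_support, mahlerSolutionCoeff] at hγ
  rcases lt_trichotomy γ 0 with hγ0 | rfl | hγ0
  · rw [if_pos hγ0] at hγ
    obtain ⟨n, hn⟩ := a.exists_coeff_ne_zero_of_geomCoeffSum_ne_zero _ (right_ne_zero_of_mul hγ)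
    rw [mul_assoc, ← pow_succ'] at hn
    refine .inl (.inr (mem_iUnion.2
      ⟨n + 1, _, ⟨hn, mul_neg_of_neg_of_pos hγ0 (pow_pos hq0 _)⟩, ?_⟩))
    dsimp only
    rw [inv_pow, mul_inv_cancel_right₀ (pow_ne_zero _ hq0.ne')]
  · exact .inl (.inl rfl)
  · rw [if_neg hγ0.not_gt, if_pos hγ0, neg_ne_zero] at hγ
    obtain ⟨n, hn⟩ := a.exists_coeff_ne_zero_of_geomCoeffSum_ne_zero _ hγ
    refine .inr (mem_iUnion.2 ⟨n, _, ⟨hn, mul_pos hγ0 (pow_pos (inv_pos.2 hq0) n)⟩, ?_⟩)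
    dsimp only
    rw [inv_pow, inv_mul_cancel_right₀ (pow_ne_zero _ hq0.ne')]

noncomputable def mahlerSolution (hq : 1 < q) : HahnSeries Γ K :=
  ⟨a.mahlerSolutionCoeff c q, a.isPWO_support_mahlerSolutionCoeff c hq⟩

@[simp]
lemma coeff_mahlerSolution (hq : 1 < q) :
    (a.mahlerSolution c hq).coeff = a.mahlerSolutionCoeff c q :=
  rfl

variable {c}

lemma mul_mahlerSolutionCoeff_div_sub (hc₀ : c ≠ 0) (hc₁ : c ≠ 1) (hq : 1 < q) (γ : Γ) :
    c * a.mahlerSolutionCoeff c q (γ / q) - a.mahlerSolutionCoeff c q γ = a.coeff γ := by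
  have hq0 : 0 < q := zero_lt_one.trans hq
  rcases lt_trichotomy γ 0 with hγ | rfl | hγ
  · have hrec := a.geomCoeffSum_eq_add c⁻¹ (strictAnti_mul_pow_of_neg hγ hq)
    rw [mahlerSolutionCoeff, if_pos (div_neg_of_neg_of_pos hγ hq0), div_mul_cancel₀ _ hq0.ne',
      mul_inv_cancel_left₀ hc₀, mahlerSolutionCoeff, if_pos hγ, hrec, add_sub_cancel_right]
  · have : c - 1 ≠ 0 := sub_ne_zero.2 hc₁
    simp only [mahlerSolutionCoeff, zero_div, lt_irrefl, if_false]
    field_simp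
  · have hrec := a.geomCoeffSum_eq_add c
      (strictAnti_mul_pow_of_pos hγ (inv_pos.2 hq0) (inv_lt_one_of_one_lt₀ hq))
    rw [mahlerSolutionCoeff, if_neg (div_pos hγ hq0).not_gt, if_pos (div_pos hγ hq0),
      mahlerSolutionCoeff, if_neg hγ.not_gt, if_pos hγ, hrec, div_eq_mul_inv]
    ring

lemma eq_zero_of_forall_mul_coeff_div_eq {f : HahnSeries Γ K} (hc₀ : c ≠ 0) (hc₁ : c ≠ 1)
    (hq : 1 < q) (hf : ∀ γ, c * f.coeff (γ / q) = f.coeff γ) : f = 0 := by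
  have hq0 : 0 < q := zero_lt_one.trans hq
  ext γ
  rcases lt_trichotomy γ 0 with hγ | rfl | hγ
  · obtain ⟨N, hN⟩ := f.exists_coeff_eq_zero_of_strictAnti (strictAnti_mul_pow_of_neg hγ hq)
    have hstep (n : ℕ) : f.coeff (γ * q ^ n) = c⁻¹ * f.coeff (γ * q ^ (n + 1)) := by
      rw [← hf (γ * q ^ (n + 1)), inv_mul_cancel_left₀ hc₀, pow_succ, ← mul_assoc,
        mul_div_cancel_right₀ _ hq0.ne']
    simpa using eq_zero_of_eq_mul_succ hstep hN
  · have hfix := hf 0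
    rw [zero_div] at hfix
    have hfix' : (c - 1) * f.coeff 0 = 0 := by rw [sub_one_mul, hfix, sub_self]
    exact (mul_eq_zero.1 hfix').resolve_left (sub_ne_zero.2 hc₁)
  · obtain ⟨N, hN⟩ := f.exists_coeff_eq_zero_of_strictAnti
      (strictAnti_mul_pow_of_pos hγ (inv_pos.2 hq0) (inv_lt_one_of_one_lt₀ hq))
    have hstep (n : ℕ) : f.coeff (γ * q⁻¹ ^ n) = c * f.coeff (γ * q⁻¹ ^ (n + 1)) := by
      rw [← hf, pow_succ, ← mul_assoc, div_eq_mul_inv]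
    simpa using eq_zero_of_eq_mul_succ hstep hN

lemma forall_mul_coeff_div_sub_eq_iff (hc₀ : c ≠ 0) (hc₁ : c ≠ 1) (hq : 1 < q)
    (f : HahnSeries Γ K) :
    (∀ γ, c * f.coeff (γ / q) - f.coeff γ = a.coeff γ) ↔ f = a.mahlerSolution c hq := by
  refine ⟨fun hf => ?_, fun hf γ => hf ▸ a.mul_mahlerSolutionCoeff_div_sub hc₀ hc₁ hq γ⟩
  refine sub_eq_zero.1 (eq_zero_of_forall_mul_coeff_div_eq hc₀ hc₁ hq fun γ => ?_)
  simp only [coeff_sub, coeff_mahlerSolution]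
  linear_combination hf γ - a.mul_mahlerSolutionCoeff_div_sub hc₀ hc₁ hq γ

variable (c)

lemma coeff_mahlerSolution_zero (hq : 1 < q) :
    (a.mahlerSolution c hq).coeff 0 = a.coeff 0 / (c - 1) := by
  simp [mahlerSolutionCoeff]

lemma coeff_mahlerSolution_of_neg (hq : 1 < q) (hγ : γ < 0) :
    (a.mahlerSolution c hq).coeff γ =
      ∑ᶠ k : {k : ℤ // k ≤ -1}, c ^ (k : ℤ) * a.coeff (γ / q ^ (k : ℤ)) := by
  rw [finsum_int_le_neg_one fun k => c ^ k * a.coeff (γ / q ^ k)]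
  simp only [coeff_mahlerSolution, mahlerSolutionCoeff, if_pos hγ, geomCoeffSum, mul_finsum]
  refine finsum_congr fun n => ?_
  rw [show -((n : ℤ) + 1) = -((n + 1 : ℕ) : ℤ) by push_cast; ring, zpow_neg, zpow_neg,
    zpow_natCast, zpow_natCast, div_inv_eq_mul, pow_succ', pow_succ', mul_inv, mul_assoc,
    mul_assoc, inv_pow]

lemma coeff_mahlerSolution_of_pos (hq : 1 < q) (hγ : 0 < γ) :
    (a.mahlerSolution c hq).coeff γ = -∑ᶠ n : ℕ, c ^ n * a.coeff (γ / q ^ n) := by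
  simp [mahlerSolutionCoeff, hγ.not_gt, hγ, geomCoeffSum, div_eq_mul_inv]

end HahnSeries

/-- For every Hahn series `g` over `ℂ(λ)` (here `RatFunc ℂ`, `λ = RatFunc.X`) with value
group `ℚ`, there is a unique Hahn series `f` with `λ·φ_p(f) − f = g`. Moreover the solution
is given by `f = Σ_{k ≤ −1} λ^k φ_p^k(g_-) + g_0/(λ−1) − Σ_{k ≥ 0} λ^k φ_p^k(g_+)`,
expressed here coefficientwise: at `0` the coefficient is `g_0/(λ−1)`, at negative `γ` it
is the (finite) sum `Σ_{k ≤ −1} λ^k g.coeff (γ/p^k)`, and at positive `γ` it is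
`− Σ_{k ≥ 0} λ^k g.coeff (γ/p^k)`. -/
theorem existsUnique_lambda_phi_sub_one (p : ℕ) (hp : 2 ≤ p)
    (φ : HahnSeries ℚ (RatFunc ℂ) → HahnSeries ℚ (RatFunc ℂ))
    (hφ : ∀ (f : HahnSeries ℚ (RatFunc ℂ)) (γ : ℚ), (φ f).coeff γ = f.coeff (γ / p))
    (g : HahnSeries ℚ (RatFunc ℂ)) :
    (∃! f : HahnSeries ℚ (RatFunc ℂ), (RatFunc.X : RatFunc ℂ) • φ f - f = g) ∧
    ∀ f : HahnSeries ℚ (RatFunc ℂ), (RatFunc.X : RatFunc ℂ) • φ f - f = g →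
      f.coeff 0 = g.coeff 0 / ((RatFunc.X : RatFunc ℂ) - 1) ∧
      (∀ γ : ℚ, γ < 0 →
        f.coeff γ = ∑ᶠ k : {k : ℤ // k ≤ -1},
          (RatFunc.X : RatFunc ℂ) ^ (k : ℤ) * g.coeff (γ / (p : ℚ) ^ (k : ℤ))) ∧
      (∀ γ : ℚ, 0 < γ →
        f.coeff γ = -∑ᶠ k : ℕ,
          (RatFunc.X : RatFunc ℂ) ^ k * g.coeff (γ / (p : ℚ) ^ k)) := by
  have hq : (1 : ℚ) < p := by exact_mod_cast hp
  have hsol (f : HahnSeries ℚ (RatFunc ℂ)) :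
      (RatFunc.X : RatFunc ℂ) • φ f - f = g ↔ f = g.mahlerSolution RatFunc.X hq := by
    rw [← g.forall_mul_coeff_div_sub_eq_iff RatFunc.X_ne_zero RatFunc.X_ne_one hq,
      HahnSeries.ext_iff, funext_iff]
    simp [hφ]
  refine ⟨⟨_, (hsol _).2 rfl, fun f hf => (hsol f).1 hf⟩, fun f hf => ?_⟩
  obtain rfl := (hsol f).1 hf
  exact ⟨g.coeff_mahlerSolution_zero _ hq, fun γ => g.coeff_mahlerSolution_of_neg _ hq,
    fun γ => g.coeff_mahlerSolution_of_pos _ hq⟩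
end

section
/- Let p ≥ 2, ν ∈ ℚ with ν < 0, and let H be the field of Hahn series over ℂ with value group ℚ, with automorphism φ defined by φ(Σ f_γ z^γ) = Σ f_γ z^{pγ}. Set h = 1 + z^{−ν/(p−1)} ∈ H. Let R be a difference ring extension of H containing e_1 with φ(e_1) = e_1 and ℓ_{1,1} with φ(ℓ_{1,1}) = ℓ_{1,1} + e_1. Then y_2 = (Σ_{k ≤ −1} z^{p^k ν/(p−1)})·e_1 + ℓ_{1,1} satisfies (φ − z^ν)∘h^{−1}∘(φ − 1) applied to y_2 equals 0, where z^ν denotes the multiplication operator by the monomial z^ν. -/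
/-!
Write `a = ν/(p-1)`. Rescaling exponents by `p` maps the support `{p^k a : k ≤ -1}` of `S` onto
`{p^k a : k ≤ 0}`, so `Φ S = S + z^a`. Hence `φ y₂ - y₂ = (z^a + 1) e₁ = z^a h e₁`, so
`h⁻¹ (φ - 1) y₂ = z^a e₁`, and `φ (z^a e₁) = z^{pa} e₁ = z^ν z^a e₁` because `pa = ν + a`.
-/

theorem exists_le_zpow_mul_eq_div_iff {K : Type*} [Field K] {q a γ : K} (hq : q ≠ 0) (n : ℤ) :
    (∃ k : ℤ, k ≤ n - 1 ∧ γ / q = q ^ k * a) ↔ ∃ k : ℤ, k ≤ n ∧ γ = q ^ k * a := by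
  constructor
  · rintro ⟨k, hk, hγ⟩
    refine ⟨k + 1, by omega, ?_⟩
    rw [zpow_add_one₀ hq, mul_right_comm, ← hγ, div_mul_cancel₀ _ hq]
  · rintro ⟨k, hk, rfl⟩
    refine ⟨k - 1, by omega, ?_⟩
    rw [zpow_sub_one₀ hq, mul_right_comm, div_eq_mul_inv]

namespace HahnSeries

theorem eq_single_mul_of_coeff_eq_coeff_div {Γ R : Type*} [Field Γ] [PartialOrder Γ] [Zero R]
    {q b : Γ} (hq : q ≠ 0) {r : R} {T : HahnSeries Γ R}
    (hT : ∀ γ, T.coeff γ = (single b r).coeff (γ / q)) :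
    T = single (q * b) r := by
  ext γ
  rw [hT]
  by_cases hγ : γ = q * b
  · rw [hγ, mul_div_cancel_left₀ _ hq, coeff_single_same, coeff_single_same]
  · rw [coeff_single_of_ne hγ, coeff_single_of_ne]
    exact fun h => hγ (by rw [← h, mul_div_cancel₀ _ hq])

theorem eq_add_single_of_coeff_eq_coeff_div {Γ R : Type*} [Field Γ] [LinearOrder Γ]
    [IsStrictOrderedRing Γ] [AddMonoid R] {q a : Γ} (hq : 1 < q) (ha : a ≠ 0) {r : R}
    {S T : HahnSeries Γ R} (hS : ∀ k : ℤ, k ≤ -1 → S.coeff (q ^ k * a) = r)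
    (hS0 : ∀ γ, (∀ k : ℤ, k ≤ -1 → γ ≠ q ^ k * a) → S.coeff γ = 0)
    (hT : ∀ γ, T.coeff γ = S.coeff (γ / q)) :
    T = S + single a r := by
  have hq0 : q ≠ 0 := (zero_lt_one.trans hq).ne'
  have hinj : Function.Injective fun k : ℤ => q ^ k * a := fun j k hjk =>
    zpow_right_injective₀ (zero_lt_one.trans hq) hq.ne' (mul_right_cancel₀ ha hjk)
  ext γ
  rw [hT, coeff_add]
  by_cases hγa : γ = a
  · rw [hγa]
    have hSa : S.coeff a = 0 := hS0 a fun k hk h => by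
      have := @hinj 0 k (by simpa using h)
      omega
    have hSaq : S.coeff (a / q) = r := by
      rw [div_eq_inv_mul, ← zpow_neg_one]
      exact hS (-1) le_rfl
    rw [hSa, hSaq, coeff_single_same, zero_add]
  rw [coeff_single_of_ne hγa, add_zero]
  by_cases hγS : ∃ k : ℤ, k ≤ -1 ∧ γ = q ^ k * a
  · obtain ⟨k, hk, hγk⟩ := (exists_le_zpow_mul_eq_div_iff hq0 (-1)).mpr hγS
    obtain ⟨j, hj, rfl⟩ := hγS
    rw [hγk, hS k (by omega), hS j hj]
  · push Not at hγS
    rw [hS0 γ hγS]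
    refine hS0 _ fun k hk hγk => ?_
    obtain ⟨j, hj, rfl⟩ := (exists_le_zpow_mul_eq_div_iff hq0 0).mp ⟨k, by omega, hγk⟩
    rcases (show j ≤ -1 ∨ j = 0 by omega) with hj | rfl
    · exact hγS j hj rfl
    · exact hγa (by simp)

theorem single_add_one_eq_single_mul_one_add_single_neg {Γ R : Type*} [AddCommGroup Γ]
    [PartialOrder Γ] [IsOrderedAddMonoid Γ] [Semiring R] (a : Γ) :
    single a (1 : R) + 1 = single a 1 * (1 + single (-a) 1) := by
  rw [mul_add, mul_one, single_mul_single, add_neg_cancel, mul_one, single_zero_one]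

theorem one_add_single_ne_zero {Γ R : Type*} [Zero Γ] [PartialOrder Γ] [AddMonoidWithOne R]
    [NeZero (1 : R)] {a : Γ} (ha : a ≠ 0) : (1 : HahnSeries Γ R) + single a 1 ≠ 0 := fun h => by
  simpa [coeff_single_of_ne ha.symm] using congrArg (coeff · 0) h

end HahnSeries

theorem mahler_example_solution_general (p : ℕ) (hp : 2 ≤ p) (ν : ℚ) (hν : ν < 0)
    (R : Type*) [CommRing R]
    (ι : HahnSeries ℚ ℂ →+* R)
    (Φ : HahnSeries ℚ ℂ →+* HahnSeries ℚ ℂ)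
    (hΦ : ∀ (f : HahnSeries ℚ ℂ) (γ : ℚ), (Φ f).coeff γ = f.coeff (γ / p))
    (φ : R →+* R) (hφι : ∀ f : HahnSeries ℚ ℂ, φ (ι f) = ι (Φ f))
    (e1 ℓ11 : R) (he1 : φ e1 = e1) (hℓ11 : φ ℓ11 = ℓ11 + e1)
    (S : HahnSeries ℚ ℂ)
    (hS1 : ∀ k : ℤ, k ≤ -1 → S.coeff ((p : ℚ) ^ k * ν / ((p : ℚ) - 1)) = 1)
    (hS0 : ∀ γ : ℚ, (∀ k : ℤ, k ≤ -1 → γ ≠ (p : ℚ) ^ k * ν / ((p : ℚ) - 1)) →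
      S.coeff γ = 0) :
    let h : HahnSeries ℚ ℂ := 1 + HahnSeries.single (-ν / ((p : ℚ) - 1)) 1
    let y2 : R := ι S * e1 + ℓ11
    let w : R := ι h⁻¹ * (φ y2 - y2)
    φ w - ι (HahnSeries.single ν 1) * w = 0 := by
  intro h y2 w
  have hp1 : (1 : ℚ) < p := by exact_mod_cast hp
  set a : ℚ := ν / ((p : ℚ) - 1) with ha
  have hp1' : (p : ℚ) - 1 ≠ 0 := sub_ne_zero.mpr hp1.ne'
  have ha0 : a ≠ 0 := div_ne_zero hν.ne hp1'
  simp only [mul_div_assoc] at hS1 hS0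
  have hΦS : Φ S = S + HahnSeries.single a 1 :=
    HahnSeries.eq_add_single_of_coeff_eq_coeff_div hp1 ha0 hS1 hS0 (hΦ S)
  have hh : h = 1 + HahnSeries.single (-a) 1 := by simp only [h, ha, neg_div]
  have hy2 : φ y2 - y2 = ι (HahnSeries.single a 1 * h) * e1 := by
    rw [hh, ← HahnSeries.single_add_one_eq_single_mul_one_add_single_neg]
    simp only [y2, map_add, map_mul, hφι, he1, hℓ11, hΦS, map_one]
    ring
  have hw : w = ι (HahnSeries.single a 1) * e1 := by
    have hh0 : h ≠ 0 := hh ▸ HahnSeries.one_add_single_ne_zero (neg_ne_zero.mpr ha0)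
    rw [show w = ι h⁻¹ * (φ y2 - y2) from rfl, hy2, ← mul_assoc, ← map_mul,
      mul_comm _ h, inv_mul_cancel_left₀ hh0]
  have hpa : (p : ℚ) * a = ν + a := by
    rw [ha]
    field_simp
    ring
  rw [hw, map_mul, hφι, HahnSeries.eq_single_mul_of_coeff_eq_coeff_div (by positivity) (hΦ _),
    he1, hpa, ← mul_assoc, ← map_mul, HahnSeries.single_mul_single, one_mul, sub_self]

/-- Let `p ≥ 2`, `ν ∈ ℚ_{<0}`, `H` the field of Hahn series over `ℂ` with value group `ℚ`
and exponent-rescaling automorphism `Φ`, `h = 1 + z^{−ν/(p−1)} ∈ H`. Let `R` be a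
difference ring extension of `H` (via `ι`, with automorphism `φ` extending `Φ`) containing
`e₁` with `φ e₁ = e₁` and `ℓ₁₁` with `φ ℓ₁₁ = ℓ₁₁ + e₁`. Then
`y₂ = (Σ_{k ≤ −1} z^{p^k ν/(p−1)})·e₁ + ℓ₁₁` is annihilated by the Mahler operator
`(φ − z^ν) ∘ h⁻¹ ∘ (φ − 1)`. -/
theorem mahler_example_solution (p : ℕ) (hp : 2 ≤ p) (ν : ℚ) (hν : ν < 0)
    (R : Type*) [CommRing R]
    (ι : HahnSeries ℚ ℂ →+* R) (hι : Function.Injective ι)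
    (Φ : HahnSeries ℚ ℂ →+* HahnSeries ℚ ℂ)
    (hΦ : ∀ (f : HahnSeries ℚ ℂ) (γ : ℚ), (Φ f).coeff γ = f.coeff (γ / p))
    (φ : R →+* R) (hφι : ∀ f : HahnSeries ℚ ℂ, φ (ι f) = ι (Φ f))
    (e1 ℓ11 : R) (he1 : φ e1 = e1) (hℓ11 : φ ℓ11 = ℓ11 + e1)
    (S : HahnSeries ℚ ℂ)
    (hS1 : ∀ k : ℤ, k ≤ -1 → S.coeff ((p : ℚ) ^ k * ν / ((p : ℚ) - 1)) = 1)
    (hS0 : ∀ γ : ℚ, (∀ k : ℤ, k ≤ -1 → γ ≠ (p : ℚ) ^ k * ν / ((p : ℚ) - 1)) →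
      S.coeff γ = 0) :
    let h : HahnSeries ℚ ℂ := 1 + HahnSeries.single (-ν / ((p : ℚ) - 1)) 1
    let y2 : R := ι S * e1 + ℓ11
    let w : R := ι h⁻¹ * (φ y2 - y2)
    φ w - ι (HahnSeries.single ν 1) * w = 0 :=
  mahler_example_solution_general p hp ν hν R ι Φ hΦ φ hφι e1 ℓ11 he1 hℓ11 S hS1 hS0
end

section
/- Let c ∈ ℂ^×, μ ∈ ℚ, p ≥ 2, and let g be a Hahn series over ℂ(λ) with value group ℚ. Then there exists a unique Hahn series f over ℂ(λ) such that (z^{−μ}·λ·φ_p − c)(f) = g, i.e. λ·z^{−μ}·φ_p(f) − c·f = g. Moreover, if val_z(θ_{−μ}·g) ≥ 0 then val_z(f) = val_z(g), and if val_z(θ_{−μ}·g) < 0 then val_z(θ_{−μ}·f) = val_z(θ_{−μ}·g)/p, where θ_{−μ} = z^{−μ/(p−1)}. -/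
/-!
Multiplying by `θ_{-μ} = z^{-ν}`, `ν = μ/(p-1)`, moves the fixed point `ν` of the exponent map
`γ ↦ (γ + μ)/p` to `0`, and the equation becomes `λ H(δ/p) - c H(δ) = G(δ)` coefficientwise.
For `δ > 0` this is solved by unrolling it along the descending orbit `δ/p^k`, for `δ < 0`
along `p^k δ`; well-foundedness of `supp G` makes each of these sums finite and keeps the support
of `H` well-founded. Comparing lowest terms shows that `G.order = min (H.order) (p * H.order)`
whenever `H ≠ 0`, which gives both uniqueness and the valuations.
-/

open HahnSeries Set

theorem Set.IsWF.finite_setOf_strictAnti {α : Type*} [Preorder α] {s : Set α} (hs : s.IsWF)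
    {u : ℕ → α} (hu : StrictAnti u) : {k | u k ∈ s}.Finite := by
  by_contra hinf
  exact isWF_iff_no_descending_seq.1 hs _ (hu.comp_strictMono (Nat.nth_strictMono hinf))
    (Nat.nth_mem_of_infinite hinf)

theorem finsum_nat_eq_add_finsum_succ {M : Type*} [AddCommMonoid M] {f : ℕ → M}
    (hf : f.support.Finite) : ∑ᶠ k, f k = f 0 + ∑ᶠ k, f (k + 1) := by
  obtain ⟨N, hN⟩ := hf.bddAbove
  have hsucc : (fun k => f (k + 1)).support ⊆ Finset.range N := fun k hk =>
    Finset.mem_range.2 (Nat.succ_le_iff.1 (hN hk))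
  rw [finsum_eq_sum_of_support_subset f (s := Finset.range (N + 1)) fun k hk =>
      Finset.mem_range.2 (Nat.lt_succ_of_le (hN hk)),
    finsum_eq_sum_of_support_subset _ hsucc, Finset.sum_range_succ', add_comm]

theorem HahnSeries.orderTop_eq_of_coeff_ne_zero {Γ R : Type*} [LinearOrder Γ] [Zero R]
    {x : HahnSeries Γ R} {t : Γ} (ht : x.coeff t ≠ 0) (hlt : ∀ δ < t, x.coeff δ = 0) :
    x.orderTop = t :=
  orderTop_eq_of_le ht fun δ hδ => not_lt.1 fun h => hδ (hlt δ h)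

section LinearOrderedField

variable {Γ : Type*} [Field Γ] [LinearOrder Γ] {K : Type*} [Field K] {q : Γ}

/-- `H` solves the Mahler equation `a • φ_q H - b • H = G`, where `φ_q` multiplies exponents
by `q`. -/
def MahlerEq (q : Γ) (a b : K) (H G : HahnSeries Γ K) : Prop :=
  ∀ δ, a * H.coeff (δ / q) - b * H.coeff δ = G.coeff δ

namespace MahlerEq

variable {a b : K} {H G : HahnSeries Γ K}

theorem eq_zero_of_sol_eq_zero (h : MahlerEq q a b H G) (hH : H = 0) : G = 0 := by
  ext δ
  simpa [hH] using (h δ).symm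

theorem sub {H' G' : HahnSeries Γ K} (h : MahlerEq q a b H G) (h' : MahlerEq q a b H' G') :
    MahlerEq q a b (H - H') (G - G') := fun δ => by
  simp only [coeff_sub, ← h δ, ← h' δ]
  ring

end MahlerEq

variable [IsStrictOrderedRing Γ]

theorem isPWO_image2_pow_mul {S : Set Γ} (hq : 1 ≤ q) (hS : S.IsPWO) (hpos : S ⊆ Ici 0) :
    (image2 (fun (k : ℕ) s => q ^ k * s) univ S).IsPWO := by
  rw [← image_prod]
  refine ((isPWO_univ_iff.2 inferInstance).prod hS).image_of_monotoneOn ?_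
  rintro ⟨k, s⟩ ⟨-, hs⟩ ⟨k', s'⟩ - ⟨hk, hss'⟩
  exact mul_le_mul (pow_le_pow_right₀ hq hk) hss' (hpos hs) (by positivity)

theorem isPWO_image2_div_pow {S : Set Γ} (hq : 1 ≤ q) (hS : S.IsPWO) (hneg : S ⊆ Iic 0) :
    (image2 (fun (k : ℕ) s => s / q ^ k) univ S).IsPWO := by
  rw [← image_prod]
  refine ((isPWO_univ_iff.2 inferInstance).prod hS).image_of_monotoneOn ?_
  rintro ⟨k, s⟩ ⟨-, -⟩ ⟨k', s'⟩ ⟨-, hs'⟩ ⟨hk, hss'⟩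
  have hq0 : 0 < q := by linarith
  calc s / q ^ k ≤ s' / q ^ k := by gcongr
    _ ≤ s' / q ^ k' := by
      simp only [div_eq_mul_inv]
      exact mul_le_mul_of_nonpos_left (inv_anti₀ (by positivity) (pow_le_pow_right₀ hq hk))
        (hneg hs')

theorem strictAnti_div_pow (hq : 1 < q) {δ : Γ} (hδ : 0 < δ) :
    StrictAnti fun k : ℕ => δ / q ^ k :=
  fun _ _ h => div_lt_div_of_pos_left hδ (pow_pos (by linarith) _) (pow_lt_pow_right₀ hq h)

theorem strictAnti_pow_mul (hq : 1 < q) {δ : Γ} (hδ : δ < 0) :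
    StrictAnti fun k : ℕ => q ^ k * δ :=
  fun _ _ h => mul_lt_mul_of_neg_right (pow_lt_pow_right₀ hq h) hδ

noncomputable def mahlerSolCoeff (q : Γ) (a b : K) (G : HahnSeries Γ K) (δ : Γ) : K :=
  if 0 < δ then -b⁻¹ * ∑ᶠ k : ℕ, (a / b) ^ k * G.coeff (δ / q ^ k)
  else if δ = 0 then G.coeff 0 / (a - b)
  else a⁻¹ * ∑ᶠ k : ℕ, (b / a) ^ k * G.coeff (q ^ (k + 1) * δ)

theorem support_mahlerSolCoeff_subset (hq : 0 < q) (a b : K) (G : HahnSeries Γ K) :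
    (mahlerSolCoeff q a b G).support ⊆
      image2 (fun (k : ℕ) s => q ^ k * s) univ (G.support ∩ Ioi 0) ∪ {0} ∪
        image2 (fun (k : ℕ) s => s / q ^ k) univ (G.support ∩ Iio 0) := by
  intro δ hδ
  rcases lt_trichotomy δ 0 with hneg | rfl | hpos
  · obtain ⟨k, hk⟩ : ∃ k : ℕ, (b / a) ^ k * G.coeff (q ^ (k + 1) * δ) ≠ 0 := by
      by_contra! h
      simp [mahlerSolCoeff, hneg.not_gt, hneg.ne, finsum_eq_zero_of_forall_eq_zero h] at hδ
    refine Or.inr ⟨k + 1, trivial, q ^ (k + 1) * δ, ⟨right_ne_zero_of_mul hk, ?_⟩, ?_⟩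
    · exact mul_neg_of_pos_of_neg (pow_pos hq _) hneg
    · exact mul_div_cancel_left₀ δ (pow_ne_zero _ hq.ne')
  · exact Or.inl (Or.inr rfl)
  · obtain ⟨k, hk⟩ : ∃ k : ℕ, (a / b) ^ k * G.coeff (δ / q ^ k) ≠ 0 := by
      by_contra! h
      simp [mahlerSolCoeff, hpos, finsum_eq_zero_of_forall_eq_zero h] at hδ
    refine Or.inl (Or.inl ⟨k, trivial, δ / q ^ k, ⟨right_ne_zero_of_mul hk, ?_⟩, ?_⟩)
    · exact div_pos hpos (pow_pos hq _)
    · exact mul_div_cancel₀ δ (pow_ne_zero _ hq.ne')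

theorem isPWO_support_mahlerSolCoeff (hq : 1 ≤ q) (a b : K) (G : HahnSeries Γ K) :
    (mahlerSolCoeff q a b G).support.IsPWO :=
  (((isPWO_image2_pow_mul hq (G.isPWO_support.mono inter_subset_left)
    fun _ h => le_of_lt h.2).union (isPWO_singleton 0)).union
    (isPWO_image2_div_pow hq (G.isPWO_support.mono inter_subset_left)
    fun _ h => le_of_lt h.2)).mono (support_mahlerSolCoeff_subset (by linarith) a b G)

noncomputable def mahlerSol (hq : 1 ≤ q) (a b : K) (G : HahnSeries Γ K) : HahnSeries Γ K :=
  ⟨mahlerSolCoeff q a b G, isPWO_support_mahlerSolCoeff hq a b G⟩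

section Recurrence

variable {a b : K} {G : HahnSeries Γ K} {δ : Γ}

theorem mahlerSolCoeff_rec_of_neg (hq : 1 < q) (ha : a ≠ 0) (hneg : δ < 0) :
    a * mahlerSolCoeff q a b G (δ / q) - b * mahlerSolCoeff q a b G δ = G.coeff δ := by
  have hq0 : 0 < q := by linarith
  have hneg' : δ / q < 0 := div_neg_of_neg_of_pos hneg hq0
  rw [mahlerSolCoeff, if_neg hneg'.not_gt, if_neg hneg'.ne, mahlerSolCoeff, if_neg hneg.not_gt,
    if_neg hneg.ne]
  set w : ℕ → K := fun k => (b / a) ^ k * G.coeff (q ^ k * δ) with hw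
  have hfin : w.support.Finite :=
    (G.isWF_support.finite_setOf_strictAnti (strictAnti_pow_mul hq hneg)).subset
      fun k hk => right_ne_zero_of_mul hk
  have e1 : a * (a⁻¹ * ∑ᶠ k : ℕ, (b / a) ^ k * G.coeff (q ^ (k + 1) * (δ / q))) =
      ∑ᶠ k, w k := by
    rw [← mul_assoc, mul_inv_cancel₀ ha, one_mul]
    refine finsum_congr fun k => ?_
    rw [pow_succ, mul_assoc, mul_div_cancel₀ δ hq0.ne']
  have e2 : b * (a⁻¹ * ∑ᶠ k : ℕ, (b / a) ^ k * G.coeff (q ^ (k + 1) * δ)) =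
      ∑ᶠ k, w (k + 1) := by
    rw [← mul_assoc, mul_finsum]
    refine finsum_congr fun k => ?_
    simp only [hw, pow_succ']
    ring
  rw [e1, e2, finsum_nat_eq_add_finsum_succ hfin]
  simp [hw]

theorem mahlerSolCoeff_rec_of_pos (hq : 1 < q) (hb : b ≠ 0) (hpos : 0 < δ) :
    a * mahlerSolCoeff q a b G (δ / q) - b * mahlerSolCoeff q a b G δ = G.coeff δ := by
  rw [mahlerSolCoeff, if_pos (div_pos hpos (by linarith)), mahlerSolCoeff, if_pos hpos]
  set w : ℕ → K := fun k => (a / b) ^ k * G.coeff (δ / q ^ k) with hw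
  have hfin : w.support.Finite :=
    (G.isWF_support.finite_setOf_strictAnti (strictAnti_div_pow hq hpos)).subset
      fun k hk => right_ne_zero_of_mul hk
  have e1 : a * (-b⁻¹ * ∑ᶠ k : ℕ, (a / b) ^ k * G.coeff (δ / q / q ^ k)) =
      -∑ᶠ k, w (k + 1) := by
    rw [neg_mul, mul_neg, neg_inj, ← mul_assoc, mul_finsum]
    refine finsum_congr fun k => ?_
    simp only [hw, pow_succ', div_div]
    ring
  have e2 : b * (-b⁻¹ * ∑ᶠ k, w k) = -∑ᶠ k, w k := by
    rw [← mul_assoc, mul_neg, mul_inv_cancel₀ hb, neg_one_mul]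
  rw [e1, e2, finsum_nat_eq_add_finsum_succ hfin]
  simp [hw]

end Recurrence

theorem mahlerEq_mahlerSol (hq : 1 < q) {a b : K} (ha : a ≠ 0) (hb : b ≠ 0) (hab : a ≠ b)
    (G : HahnSeries Γ K) : MahlerEq q a b (mahlerSol hq.le a b G) G := by
  intro δ
  rcases lt_trichotomy δ 0 with hneg | rfl | hpos
  · exact mahlerSolCoeff_rec_of_neg hq ha hneg
  · show a * mahlerSolCoeff q a b G (0 / q) - b * mahlerSolCoeff q a b G 0 = G.coeff 0
    rw [zero_div, mahlerSolCoeff, if_neg (lt_irrefl 0), if_pos rfl, ← sub_mul,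
      mul_div_cancel₀ _ (sub_ne_zero.2 hab)]
  · exact mahlerSolCoeff_rec_of_pos hq hb hpos

namespace MahlerEq

variable {a b : K} {H G : HahnSeries Γ K}

-- The lowest term of `G` is `-b H(ω)` at `ω` if `ω > 0`, `(a - b) H(0)` at `0` if `ω = 0`,
-- and `a H(ω)` at `q ω` if `ω < 0`, where `ω = H.order`.
theorem orderTop_eq (h : MahlerEq q a b H G) (hq : 1 < q) (ha : a ≠ 0) (hb : b ≠ 0) (hab : a ≠ b)
    (hH : H ≠ 0) : G.orderTop = ↑(min H.order (q * H.order)) := by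
  have hq0 : 0 < q := by linarith
  set ω := H.order
  have hω : H.coeff ω ≠ 0 := coeff_order_eq_zero.not.2 hH
  have hlow {δ : Γ} (hδ : δ < ω) : H.coeff δ = 0 := coeff_eq_zero_of_lt_order hδ
  refine orderTop_eq_of_coeff_ne_zero ?_ fun δ hδ => ?_
  · rw [← h]
    rcases lt_trichotomy ω 0 with hneg | hzero | hpos
    · rw [min_eq_right (by nlinarith), mul_div_cancel_left₀ ω hq0.ne',
        hlow (δ := q * ω) (by nlinarith), mul_zero, sub_zero]
      exact mul_ne_zero ha hω
    · rw [hzero, mul_zero, min_self, zero_div, ← sub_mul]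
      exact mul_ne_zero (sub_ne_zero.2 hab) (hzero ▸ hω)
    · rw [min_eq_left (by nlinarith), hlow (div_lt_self hpos hq), mul_zero, zero_sub, neg_ne_zero]
      exact mul_ne_zero hb hω
  · rw [lt_min_iff] at hδ
    rw [← h, hlow hδ.1, hlow ((div_lt_iff₀ hq0).2 (by linarith [hδ.2])), mul_zero, mul_zero,
      sub_zero]

theorem order_eq (h : MahlerEq q a b H G) (hq : 1 < q) (ha : a ≠ 0) (hb : b ≠ 0) (hab : a ≠ b)
    (hH : H ≠ 0) : G.order = min H.order (q * H.order) := by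
  have htop := h.orderTop_eq hq ha hb hab hH
  have hG : G ≠ 0 := orderTop_ne_top.1 (htop ▸ WithTop.coe_ne_top)
  exact WithTop.coe_injective ((order_eq_orderTop_of_ne_zero hG).trans htop)

theorem order_eq_of_nonneg (h : MahlerEq q a b H G) (hq : 1 < q) (ha : a ≠ 0) (hb : b ≠ 0)
    (hab : a ≠ b) (hG : G ≠ 0) (h0 : 0 ≤ G.order) : H.order = G.order := by
  have hH : H ≠ 0 := fun hH => hG (h.eq_zero_of_sol_eq_zero hH)
  rw [h.order_eq hq ha hb hab hH] at h0 ⊢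
  have hω : 0 ≤ H.order := by
    by_contra! hneg
    exact ((min_le_right _ _).trans_lt (mul_neg_of_pos_of_neg (by linarith) hneg)).not_ge h0
  exact (min_eq_left (le_mul_of_one_le_left hω hq.le)).symm

theorem order_eq_div_of_neg (h : MahlerEq q a b H G) (hq : 1 < q) (ha : a ≠ 0) (hb : b ≠ 0)
    (hab : a ≠ b) (h0 : G.order < 0) : H.order = G.order / q := by
  have hH : H ≠ 0 := by
    intro hH
    simp [h.eq_zero_of_sol_eq_zero hH] at h0
  rw [h.order_eq hq ha hb hab hH] at h0 ⊢
  have hω : H.order < 0 := by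
    by_contra! hnonneg
    exact h0.not_ge (le_min hnonneg (mul_nonneg (by linarith) hnonneg))
  rw [min_eq_right (mul_le_of_one_le_left hω.le hq.le), mul_div_cancel_left₀ _ (by linarith)]

end MahlerEq

theorem existsUnique_mahlerEq (hq : 1 < q) {a b : K} (ha : a ≠ 0) (hb : b ≠ 0) (hab : a ≠ b)
    (G : HahnSeries Γ K) : ∃! H, MahlerEq q a b H G := by
  have hsol := mahlerEq_mahlerSol hq ha hb hab G
  refine ⟨mahlerSol hq.le a b G, hsol, fun H hH => ?_⟩
  by_contra hne
  have htop := (hH.sub hsol).orderTop_eq hq ha hb hab (sub_ne_zero.2 hne)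
  rw [sub_self, orderTop_zero] at htop
  exact WithTop.top_ne_coe htop

theorem coeff_single_neg_one_mul (ν : Γ) (x : HahnSeries Γ K) (δ : Γ) :
    (single (-ν) (1 : K) * x).coeff δ = x.coeff (δ + ν) := by
  rw [coeff_single_mul, one_mul, sub_neg_eq_add]

theorem single_one_mul_single_one_mul {ν ν' : Γ} (h : ν + ν' = 0) (x : HahnSeries Γ K) :
    single ν (1 : K) * (single ν' 1 * x) = x := by
  rw [← mul_assoc, single_mul_single, h, mul_one, single_zero_one, one_mul]

theorem single_mul_smul_sub_smul_eq_iff_mahlerEq {μ : Γ} (hq₀ : q ≠ 0) (hq₁ : q ≠ 1)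
    {φ : HahnSeries Γ K → HahnSeries Γ K} (hφ : ∀ f γ, (φ f).coeff γ = f.coeff (γ / q))
    (a b : K) (f g : HahnSeries Γ K) :
    single (-μ) 1 * (a • φ f) - b • f = g ↔
      MahlerEq q a b (single (-(μ / (q - 1))) 1 * f) (single (-(μ / (q - 1))) 1 * g) := by
  set ν := μ / (q - 1)
  have hν : ν * (q - 1) = μ := div_mul_cancel₀ μ (sub_ne_zero.2 hq₁)
  have hcoeff (δ : Γ) : (single (-μ) 1 * (a • φ f) - b • f).coeff (δ + ν) =
      a * f.coeff (δ / q + ν) - b * f.coeff (δ + ν) := by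
    rw [coeff_sub, coeff_single_mul, sub_neg_eq_add, coeff_smul, coeff_smul, hφ, one_mul,
      smul_eq_mul, smul_eq_mul, ← hν]
    congr 3
    field_simp
    ring
  simp only [MahlerEq, coeff_single_neg_one_mul, ← hcoeff]
  constructor
  · rintro rfl δ
    rfl
  · intro h
    ext γ
    simpa using h (γ - ν)

end LinearOrderedField

theorem RatFunc.X_ne_algebraMap {K : Type*} [Field K] (c : K) :
    (RatFunc.X : RatFunc K) ≠ algebraMap K _ c := by
  intro h
  have := congrArg RatFunc.intDegree h
  rw [RatFunc.intDegree_X, RatFunc.algebraMap_eq_C, RatFunc.intDegree_C] at this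
  exact one_ne_zero this

/-- Let `c ∈ ℂ^×`, `μ ∈ ℚ`, `p ≥ 2`, and let `g` be a Hahn series over `ℂ(λ)` (here
`RatFunc ℂ`, `λ = RatFunc.X`) with value group `ℚ`. Then there is a unique Hahn series
`f` with `z^{−μ}·λ·φ_p(f) − c·f = g`. Moreover, if `val_z(θ_{−μ} g) ≥ 0` (i.e.
`g.order ≥ μ/(p−1)`) then `val_z f = val_z g`, and if `val_z(θ_{−μ} g) < 0` then
`val_z(θ_{−μ} f) = val_z(θ_{−μ} g)/p`, where `θ_{−μ} = z^{−μ/(p−1)}`. -/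
theorem existsUnique_order_one_mahler (p : ℕ) (hp : 2 ≤ p) (μ : ℚ) (c : ℂ) (hc : c ≠ 0)
    (φ : HahnSeries ℚ (RatFunc ℂ) → HahnSeries ℚ (RatFunc ℂ))
    (hφ : ∀ (f : HahnSeries ℚ (RatFunc ℂ)) (γ : ℚ), (φ f).coeff γ = f.coeff (γ / p))
    (g : HahnSeries ℚ (RatFunc ℂ)) :
    (∃! f : HahnSeries ℚ (RatFunc ℂ),
      HahnSeries.single (-μ) (1 : RatFunc ℂ) * ((RatFunc.X : RatFunc ℂ) • φ f) -
        (algebraMap ℂ (RatFunc ℂ) c) • f = g) ∧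
    ∀ f : HahnSeries ℚ (RatFunc ℂ),
      HahnSeries.single (-μ) (1 : RatFunc ℂ) * ((RatFunc.X : RatFunc ℂ) • φ f) -
          (algebraMap ℂ (RatFunc ℂ) c) • f = g →
      g ≠ 0 →
      f ≠ 0 ∧
        (μ / ((p : ℚ) - 1) ≤ g.order → f.order = g.order) ∧
        (g.order < μ / ((p : ℚ) - 1) →
          f.order - μ / ((p : ℚ) - 1) = (g.order - μ / ((p : ℚ) - 1)) / p) := by
  have hp1 : (1 : ℚ) < p := by exact_mod_cast hp
  have ha : (RatFunc.X : RatFunc ℂ) ≠ 0 := RatFunc.X_ne_zero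
  have hb : algebraMap ℂ (RatFunc ℂ) c ≠ 0 := by simpa using hc
  have hab := RatFunc.X_ne_algebraMap c
  have key := single_mul_smul_sub_smul_eq_iff_mahlerEq (μ := μ) (by positivity) hp1.ne' hφ
    RatFunc.X (algebraMap ℂ (RatFunc ℂ) c) (g := g)
  set ν := μ / ((p : ℚ) - 1)
  have hord {x : HahnSeries ℚ (RatFunc ℂ)} (hx : x ≠ 0) :
      (single (-ν) (1 : RatFunc ℂ) * x).order = -ν + x.order :=
    order_single_mul_of_isRegular isRegular_one hx
  obtain ⟨H, hH, huniq⟩ := existsUnique_mahlerEq hp1 ha hb hab (single (-ν) 1 * g)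
  refine ⟨⟨single ν 1 * H, (key _).2 ?_, fun f hf => ?_⟩, fun f hf hg => ?_⟩
  · rwa [single_one_mul_single_one_mul (neg_add_cancel ν)]
  · rw [← huniq _ ((key f).1 hf), single_one_mul_single_one_mul (add_neg_cancel ν)]
  have hf' := (key f).1 hf
  have hθg : single (-ν) 1 * g ≠ 0 := mul_ne_zero (single_ne_zero one_ne_zero) hg
  have hf0 : f ≠ 0 := by
    rintro rfl
    exact hθg (hf'.eq_zero_of_sol_eq_zero (mul_zero _))
  refine ⟨hf0, fun hle => ?_, fun hlt => ?_⟩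
  · have := hf'.order_eq_of_nonneg hp1 ha hb hab hθg (by rw [hord hg]; linarith)
    rw [hord hf0, hord hg] at this
    linarith
  · have := hf'.order_eq_div_of_neg hp1 ha hb hab (by rw [hord hg]; linarith)
    rw [hord hf0, hord hg] at this
    linear_combination this
end

section
/- Let L = Σ_{i=0}^n a_i(z) φ_p^i be a Mahler operator over the Hahn series field H with all slopes nonnegative (S(L) ⊂ ℝ_{≥0}) and a_0 = 1, and let c ∈ ℂ^×. Then the Newton polygon of the operator L·(φ_p − c) equals ([1, p] × [val_z(a_0), ∞)) ∪ ψ(N(L)), where ψ(x, y) = (px, y); consequently the set of slopes of L·(φ_p − c) is p^{−1}·S(L) ∪ {0}. -/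
/-!
Because `a_0 = 1` and `L` has no negative slope, every `val_z(a_i)` is `≥ 0`, hence so is every
`val_z(b_i)`; moreover `val_z(b_0) = 0`, and `val_z(b_{m+1}) = 0` for the last `m` at which `a_m`
has a nonzero constant term. This produces the strip `[1, p] × [0, ∞)`.

Since `val_z(b_{i+1}) ≥ min(val_z(a_i), val_z(a_{i+1}))`, every point of `N(b)` above `p^{i+1}`
comes from a point of `N(L)` above `p^i` or, horizontally shifted, from one above `p^{i+1}`.
Conversely `val_z(b_{i+1}) = val_z(a_i)` unless `a_{i+1}` lies at most as low as `a_i`, and then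
one moves one step to the right.

For `s > 0`, at an index `j` minimising `val_z(a_j) − p s p^j` the term `a_{j+1}` lies strictly
higher than `a_j`, so `b_{j+1}` does not cancel: the minimisers for `N(b)` at slope `s` are exactly
the shifted minimisers for `N(L)` at slope `p s`.
-/

/-- The Newton polygon of a Mahler operator `L = Σ_{i=0}^n a_i(z) φ_p^i`: the convex hull
in `ℝ²` of `{(p^i, j) : 0 ≤ i ≤ n, a_i ≠ 0, j ≥ val_z(a_i)}`. -/
noncomputable def mahlerNewtonPolygon (p n : ℕ) (a : ℕ → HahnSeries ℚ ℂ) : Set (ℝ × ℝ) :=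
  convexHull ℝ
    {q : ℝ × ℝ | ∃ i ≤ n, a i ≠ 0 ∧ q.1 = (p : ℝ) ^ i ∧ ((a i).order : ℝ) ≤ q.2}

/-- The multiplicity of `s ∈ ℚ` as a slope of `L = Σ_{i=0}^n a_i(z) φ_p^i`: among the
indices `i` (with `a_i ≠ 0`) minimizing `val_z(a_i) − s·p^i`, the difference between the
largest and the smallest; `s` is a slope of `L` precisely when this is nonzero. -/
noncomputable def mahlerSlopeMult (p n : ℕ) (a : ℕ → HahnSeries ℚ ℂ) (s : ℚ) : ℕ :=
  sSup {i : ℕ | i ≤ n ∧ a i ≠ 0 ∧ ∀ j ≤ n, a j ≠ 0 →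
      (a i).order - s * (p : ℚ) ^ i ≤ (a j).order - s * (p : ℚ) ^ j} -
    sInf {i : ℕ | i ≤ n ∧ a i ≠ 0 ∧ ∀ j ≤ n, a j ≠ 0 →
      (a i).order - s * (p : ℚ) ^ i ≤ (a j).order - s * (p : ℚ) ^ j}
open Set

lemma Convex.mk_mem_of_le_of_le {C : Set (ℝ × ℝ)} (hC : Convex ℝ C) {x₁ x₂ x y : ℝ}
    (h₁ : (x₁, y) ∈ C) (h₂ : (x₂, y) ∈ C) (hx₁ : x₁ ≤ x) (hx₂ : x ≤ x₂) : (x, y) ∈ C := by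
  have hline : ∀ t : ℝ, AffineMap.lineMap ((0 : ℝ), y) (1, y) t = (t, y) := fun t => by
    simp [AffineMap.lineMap_apply]
  have hconv := (hC.affine_preimage (AffineMap.lineMap ((0 : ℝ), y) (1, y))).ordConnected
  simpa [hline] using hconv.out (by simpa [hline] using h₁) (by simpa [hline] using h₂) ⟨hx₁, hx₂⟩

lemma convex_Icc_prod_Ici_union {a P b : ℝ} {D : Set (ℝ × ℝ)} (hD : Convex ℝ D) (haP : a ≤ P)
    (hDsub : D ⊆ Ici P ×ˢ Ici b) (hray : ∀ y, b ≤ y → (P, y) ∈ D) :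
    Convex ℝ (Icc a P ×ˢ Ici b ∪ D) := by
  -- pushing a point horizontally to `x = P` lands in `D` exactly on this set
  have hunion : Icc a P ×ˢ Ici b ∪ D = {q | a ≤ q.1 ∧ b ≤ q.2 ∧ (max q.1 P, q.2) ∈ D} := by
    ext ⟨x, y⟩
    simp only [mem_union, mem_prod, mem_Icc, mem_Ici, mem_ofPred_eq]
    constructor
    · rintro (⟨⟨hax, hxP⟩, hby⟩ | hq)
      · exact ⟨hax, hby, by rw [max_eq_right hxP]; exact hray y hby⟩
      · obtain ⟨hPx, hby⟩ := hDsub hq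
        exact ⟨haP.trans hPx, hby, by rwa [max_eq_left hPx]⟩
    · rintro ⟨hax, hby, hq⟩
      rcases le_total x P with hxP | hPx
      · exact Or.inl ⟨⟨hax, hxP⟩, hby⟩
      · exact Or.inr (by rwa [max_eq_left hPx] at hq)
  rw [hunion]
  rintro ⟨x₁, y₁⟩ ⟨ha₁, hb₁, hD₁⟩ ⟨x₂, y₂⟩ ⟨ha₂, hb₂, hD₂⟩ α β hα hβ hαβ
  simp only [Prod.smul_mk, Prod.mk_add_mk, smul_eq_mul, mem_ofPred_eq]
  have hy : b ≤ α * y₁ + β * y₂ := convex_Ici b hb₁ hb₂ hα hβ hαβ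
  refine ⟨convex_Ici a ha₁ ha₂ hα hβ hαβ, hy, ?_⟩
  have hcomb := hD hD₁ hD₂ hα hβ hαβ
  simp only [Prod.smul_mk, Prod.mk_add_mk, smul_eq_mul] at hcomb
  refine hD.mk_mem_of_le_of_le (hray _ hy) hcomb (le_max_right _ _) (max_le ?_ ?_)
  · exact add_le_add (mul_le_mul_of_nonneg_left (le_max_left _ _) hα)
      (mul_le_mul_of_nonneg_left (le_max_left _ _) hβ)
  · exact convex_Ici P (le_max_right x₁ P) (le_max_right x₂ P) hα hβ hαβ

theorem Nat.sSup_sub_sInf_ne_zero_iff {S : Set ℕ} (hS : BddAbove S) :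
    sSup S - sInf S ≠ 0 ↔ ∃ i ∈ S, ∃ j ∈ S, i < j := by
  constructor
  · intro h
    obtain ⟨i, hi⟩ : S.Nonempty := nonempty_iff_ne_empty.2 fun h' => by simp [h'] at h
    exact ⟨_, Nat.sInf_mem ⟨i, hi⟩, _, Nat.sSup_mem ⟨i, hi⟩ hS, by omega⟩
  · rintro ⟨i, hi, j, hj, hij⟩
    have := Nat.sInf_le hi
    have := le_csSup hS hj
    omega

namespace HahnSeries

variable {Γ : Type*} [LinearOrder Γ]

theorem orderTop_le_coe_iff {R : Type*} [Zero Γ] [Zero R] {x : HahnSeries Γ R} {g : Γ} :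
    x.orderTop ≤ g ↔ x ≠ 0 ∧ x.order ≤ g := by
  by_cases hx : x = 0
  · simp [hx]
  · simp [hx, ← order_eq_orderTop_of_ne_zero hx]

theorem orderTop_smul_of_ne_zero {K : Type*} [DivisionRing K] {c : K} (hc : c ≠ 0)
    (x : HahnSeries Γ K) : (c • x).orderTop = x.orderTop :=
  le_antisymm (by simpa [smul_smul, inv_mul_cancel₀ hc] using orderTop_le_orderTop_smul c⁻¹ (c • x))
    (orderTop_le_orderTop_smul c x)

theorem orderTop_eq_coe_iff {R : Type*} [Zero Γ] [Zero R] {x : HahnSeries Γ R} {g : Γ} :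
    x.orderTop = g ↔ x ≠ 0 ∧ x.order = g := by
  by_cases hx : x = 0
  · simp [hx]
  · simp [hx, ← order_eq_orderTop_of_ne_zero hx]

end HahnSeries

open HahnSeries

section Mahler

variable {p n : ℕ} {a : ℕ → HahnSeries ℚ ℂ}

def mahlerSlopeArgmin (p n : ℕ) (a : ℕ → HahnSeries ℚ ℂ) (s : ℚ) : Set ℕ :=
  {i : ℕ | i ≤ n ∧ a i ≠ 0 ∧ ∀ j ≤ n, a j ≠ 0 →
      (a i).order - s * (p : ℚ) ^ i ≤ (a j).order - s * (p : ℚ) ^ j}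

theorem mahlerSlopeMult_ne_zero_iff {s : ℚ} :
    mahlerSlopeMult p n a s ≠ 0 ↔
      ∃ i ∈ mahlerSlopeArgmin p n a s, ∃ j ∈ mahlerSlopeArgmin p n a s, i < j :=
  Nat.sSup_sub_sInf_ne_zero_iff ⟨n, fun _ hi => hi.1⟩

theorem mahlerSlopeArgmin_nonempty (h0 : a 0 ≠ 0) (s : ℚ) :
    (mahlerSlopeArgmin p n a s).Nonempty := by
  classical
  obtain ⟨k, hk, hmin⟩ := ((Finset.range (n + 1)).filter (a · ≠ 0)).exists_min_image
    (fun i => (a i).order - s * (p : ℚ) ^ i) ⟨0, by simpa using h0⟩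
  simp only [Finset.mem_filter, Finset.mem_range] at hk hmin
  exact ⟨k, by omega, hk.2, fun j hj haj => hmin j ⟨by omega, haj⟩⟩

theorem mk_pow_mem_mahlerNewtonPolygon {i : ℕ} {y : ℝ} (hi : i ≤ n) (ha : a i ≠ 0)
    (hy : ((a i).order : ℝ) ≤ y) : ((p : ℝ) ^ i, y) ∈ mahlerNewtonPolygon p n a :=
  subset_convexHull ℝ _ ⟨i, hi, ha, rfl, hy⟩

theorem mk_one_mem_mahlerNewtonPolygon {y : ℝ} (h0 : a 0 ≠ 0) (hy : ((a 0).order : ℝ) ≤ y) :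
    ((1 : ℝ), y) ∈ mahlerNewtonPolygon p n a := by
  simpa using mk_pow_mem_mahlerNewtonPolygon (p := p) (Nat.zero_le n) h0 hy

theorem mahlerNewtonPolygon_subset_Ici_prod_Ici (hp : 1 ≤ p) (hnonneg : ∀ i, 0 ≤ (a i).order) :
    mahlerNewtonPolygon p n a ⊆ Ici 1 ×ˢ Ici 0 :=
  convexHull_min
    (fun _ ⟨i, _, _, hx, hy⟩ => ⟨by rw [mem_Ici, hx]; exact one_le_pow₀ (by exact_mod_cast hp),
      (Rat.cast_nonneg.2 (hnonneg i)).trans hy⟩)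
    ((convex_Ici 1).prod (convex_Ici 0))

theorem order_nonneg_of_slopes_nonneg (hp : 1 < p) (h0 : a 0 = 1)
    (hslopes : ∀ s : ℚ, s < 0 → mahlerSlopeMult p n a s = 0) {i : ℕ} (hi : i ≤ n) :
    0 ≤ (a i).order := by
  classical
  by_contra! hneg
  have hpow : ∀ j, j ≠ 0 → (0 : ℚ) < (p : ℚ) ^ j - 1 := fun j hj =>
    sub_pos.2 (one_lt_pow₀ (by exact_mod_cast hp) hj)
  have hi0 : i ≠ 0 := by rintro rfl; simp [h0] at hneg
  have hai : a i ≠ 0 := by rintro h; simp [h] at hneg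
  let r : ℕ → ℚ := fun j => (a j).order / ((p : ℚ) ^ j - 1)
  set F := (Finset.Icc 1 n).filter (a · ≠ 0)
  have hF : ∀ {j}, j ∈ F ↔ (j ≠ 0 ∧ j ≤ n) ∧ a j ≠ 0 := by
    simp [F, Nat.one_le_iff_ne_zero]
  obtain ⟨m, hmF, hm⟩ := F.exists_min_image r ⟨i, hF.2 ⟨⟨hi0, hi⟩, hai⟩⟩
  obtain ⟨⟨hm0, hmn⟩, ham⟩ := hF.1 hmF
  -- `r m` is the slope of the first edge of `N(L)`, which starts at `(1, 0)`
  have hs : r m < 0 :=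
    (hm i (hF.2 ⟨⟨hi0, hi⟩, hai⟩)).trans_lt (div_neg_of_neg_of_pos hneg (hpow i hi0))
  have hbound : ∀ j ≤ n, a j ≠ 0 → r m * ((p : ℚ) ^ j - 1) ≤ (a j).order := by
    intro j hj haj
    rcases eq_or_ne j 0 with rfl | hj0
    · simp [h0]
    · exact (le_div_iff₀ (hpow j hj0)).1 (hm j (hF.2 ⟨⟨hj0, hj⟩, haj⟩))
  have hrm : r m * ((p : ℚ) ^ m - 1) = (a m).order := div_mul_cancel₀ _ (hpow m hm0).ne'
  have h0mem : 0 ∈ mahlerSlopeArgmin p n a (r m) :=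
    ⟨Nat.zero_le n, by simp [h0], fun j hj haj => by
      simp only [h0, order_one, pow_zero]
      linarith [hbound j hj haj]⟩
  have hmmem : m ∈ mahlerSlopeArgmin p n a (r m) :=
    ⟨hmn, ham, fun j hj haj => by linarith [hbound j hj haj]⟩
  exact mahlerSlopeMult_ne_zero_iff.2 ⟨0, h0mem, m, hmmem, Nat.pos_of_ne_zero hm0⟩ (hslopes _ hs)

/-- The coefficients `b_i` of `L·(φ_p − c)`, for `L = Σ a_i φ_p^i`. -/
def mahlerMulPhiSub (a : ℕ → HahnSeries ℚ ℂ) (c : ℂ) (i : ℕ) : HahnSeries ℚ ℂ :=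
  (if i = 0 then 0 else a (i - 1)) - c • a i

variable {c : ℂ}

@[simp]
theorem mahlerMulPhiSub_zero : mahlerMulPhiSub a c 0 = -(c • a 0) := by
  simp [mahlerMulPhiSub]

@[simp]
theorem mahlerMulPhiSub_succ (i : ℕ) : mahlerMulPhiSub a c (i + 1) = a i - c • a (i + 1) := by
  simp [mahlerMulPhiSub]

theorem orderTop_mahlerMulPhiSub_zero (hc : c ≠ 0) :
    (mahlerMulPhiSub a c 0).orderTop = (a 0).orderTop := by
  rw [mahlerMulPhiSub_zero, orderTop_neg, orderTop_smul_of_ne_zero hc]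

theorem min_orderTop_le_orderTop_mahlerMulPhiSub_succ (hc : c ≠ 0) (i : ℕ) :
    min (a i).orderTop (a (i + 1)).orderTop ≤ (mahlerMulPhiSub a c (i + 1)).orderTop := by
  simpa [orderTop_smul_of_ne_zero hc] using
    min_orderTop_le_orderTop_sub (x := a i) (y := c • a (i + 1))

theorem orderTop_mahlerMulPhiSub_succ_of_lt (hc : c ≠ 0) {i : ℕ}
    (h : (a i).orderTop < (a (i + 1)).orderTop) :
    (mahlerMulPhiSub a c (i + 1)).orderTop = (a i).orderTop := by
  rw [mahlerMulPhiSub_succ, orderTop_sub (by rwa [orderTop_smul_of_ne_zero hc])]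

theorem order_mahlerMulPhiSub_nonneg (hc : c ≠ 0) (hnonneg : ∀ i, 0 ≤ (a i).order) (i : ℕ) :
    0 ≤ (mahlerMulPhiSub a c i).order := by
  simp only [← zero_le_orderTop_iff] at hnonneg ⊢
  cases i with
  | zero => exact (orderTop_mahlerMulPhiSub_zero hc).symm ▸ hnonneg 0
  | succ i =>
    exact (le_min (hnonneg i) (hnonneg (i + 1))).trans
      (min_orderTop_le_orderTop_mahlerMulPhiSub_succ hc i)

theorem mahlerMulPhiSub_zero_ne_zero_and_order_eq_zero (hc : c ≠ 0) (h0 : a 0 = 1) :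
    mahlerMulPhiSub a c 0 ≠ 0 ∧ (mahlerMulPhiSub a c 0).order = 0 :=
  orderTop_eq_coe_iff.1 (by rw [orderTop_mahlerMulPhiSub_zero hc, h0, orderTop_one]; rfl)

theorem exists_mahlerMulPhiSub_succ_order_eq_zero (hc : c ≠ 0) (h0 : a 0 = 1)
    (htail : ∀ i, n < i → a i = 0) (hnonneg : ∀ i, 0 ≤ (a i).order) :
    ∃ i ≤ n, mahlerMulPhiSub a c (i + 1) ≠ 0 ∧ (mahlerMulPhiSub a c (i + 1)).order = 0 := by
  classical
  -- at the last index `m` where `a_m` has a nonzero constant term, `b_{m+1}` inherits it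
  set m := Nat.findGreatest (fun i => (a i).coeff 0 ≠ 0) n
  have hmn : m ≤ n := Nat.findGreatest_le n
  have hm : (a m).coeff 0 ≠ 0 := Nat.findGreatest_spec (P := fun i => (a i).coeff 0 ≠ 0)
    (Nat.zero_le n) (by simp [h0])
  have hm1 : (a (m + 1)).coeff 0 = 0 := by
    rcases le_or_gt (m + 1) n with h | h
    · exact not_not.1 (Nat.findGreatest_is_greatest (Nat.lt_succ_self m) h)
    · simp [htail _ h]
  have hb : (mahlerMulPhiSub a c (m + 1)).coeff 0 ≠ 0 := by simpa [hm1] using hm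
  have hb0 : mahlerMulPhiSub a c (m + 1) ≠ 0 := fun h => hb (by rw [h, coeff_zero])
  exact ⟨m, hmn, hb0, le_antisymm (order_le_of_coeff_ne_zero hb)
    (order_mahlerMulPhiSub_nonneg hc hnonneg _)⟩

theorem mk_pow_mem_mahlerNewtonPolygon_of_mahlerMulPhiSub (hp : 1 ≤ p) (hc : c ≠ 0)
    (h0 : a 0 = 1) (htail : ∀ i, n < i → a i = 0) (hnonneg : ∀ i, 0 ≤ (a i).order) {i : ℕ}
    {y : ℝ} (hb : mahlerMulPhiSub a c (i + 1) ≠ 0)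
    (hy : ((mahlerMulPhiSub a c (i + 1)).order : ℝ) ≤ y) :
    ((p : ℝ) ^ i, y) ∈ mahlerNewtonPolygon p n a := by
  have hmin := min_orderTop_le_orderTop_mahlerMulPhiSub_succ (a := a) hc i
  rw [← order_eq_orderTop_of_ne_zero hb, min_le_iff, orderTop_le_coe_iff,
    orderTop_le_coe_iff] at hmin
  rcases hmin with ⟨ha, hle⟩ | ⟨ha, hle⟩
  · exact mk_pow_mem_mahlerNewtonPolygon (not_lt.1 (ha ∘ htail i)) ha
      ((Rat.cast_le.2 hle).trans hy)
  · have hy0 : ((a 0).order : ℝ) ≤ y := by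
      simpa [h0] using (Rat.cast_nonneg.2 (order_mahlerMulPhiSub_nonneg hc hnonneg _)).trans hy
    exact (convex_convexHull ℝ _).mk_mem_of_le_of_le
      (mk_one_mem_mahlerNewtonPolygon (by simp [h0]) hy0)
      (mk_pow_mem_mahlerNewtonPolygon (not_lt.1 (ha ∘ htail _)) ha ((Rat.cast_le.2 hle).trans hy))
      (one_le_pow₀ (by exact_mod_cast hp)) (pow_le_pow_right₀ (by exact_mod_cast hp) i.le_succ)

theorem mk_pow_succ_mem_mahlerNewtonPolygon_mahlerMulPhiSub (hp : 1 ≤ p) (hc : c ≠ 0)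
    (h0 : a 0 = 1) (htail : ∀ i, n < i → a i = 0) (hnonneg : ∀ i, 0 ≤ (a i).order) {i : ℕ}
    {y : ℝ} (hi : i ≤ n) (ha : a i ≠ 0) (hy : ((a i).order : ℝ) ≤ y) :
    ((p : ℝ) ^ (i + 1), y) ∈ mahlerNewtonPolygon p (n + 1) (mahlerMulPhiSub a c) := by
  have hai : (a i).orderTop = (a i).order := (order_eq_orderTop_of_ne_zero ha).symm
  by_cases hlt : (a i).orderTop < (a (i + 1)).orderTop
  · obtain ⟨hb, hble⟩ := orderTop_le_coe_iff.1
      ((orderTop_mahlerMulPhiSub_succ_of_lt hc hlt).trans hai).le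
    exact mk_pow_mem_mahlerNewtonPolygon (by omega) hb ((Rat.cast_le.2 hble).trans hy)
  · -- `b_{i+1}` may cancel, but then `a_{i+1}` lies lower and we move one step right
    obtain ⟨ha₁, hle⟩ := orderTop_le_coe_iff.1 ((not_lt.1 hlt).trans hai.le)
    have hi₁ : i + 1 ≤ n := not_lt.1 (ha₁ ∘ htail _)
    obtain ⟨hb0, hb0o⟩ := mahlerMulPhiSub_zero_ne_zero_and_order_eq_zero hc h0 (a := a)
    have hy0 : ((mahlerMulPhiSub a c 0).order : ℝ) ≤ y := by
      rw [hb0o, Rat.cast_zero]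
      exact (Rat.cast_nonneg.2 (hnonneg i)).trans hy
    exact (convex_convexHull ℝ _).mk_mem_of_le_of_le
      (mk_one_mem_mahlerNewtonPolygon hb0 hy0)
      (mk_pow_succ_mem_mahlerNewtonPolygon_mahlerMulPhiSub hp hc h0 htail hnonneg hi₁ ha₁
        ((Rat.cast_le.2 hle).trans hy))
      (one_le_pow₀ (by exact_mod_cast hp)) (pow_le_pow_right₀ (by exact_mod_cast hp) (by omega))
termination_by n - i

theorem Icc_prod_Ici_subset_mahlerNewtonPolygon_mahlerMulPhiSub (hp : 1 ≤ p) (hc : c ≠ 0)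
    (h0 : a 0 = 1) (htail : ∀ i, n < i → a i = 0) (hnonneg : ∀ i, 0 ≤ (a i).order) :
    Icc 1 (p : ℝ) ×ˢ Ici 0 ⊆ mahlerNewtonPolygon p (n + 1) (mahlerMulPhiSub a c) := by
  rintro ⟨x, y⟩ ⟨⟨hx₁, hxp⟩, hy⟩
  obtain ⟨i, hi, hb, hbo⟩ := exists_mahlerMulPhiSub_succ_order_eq_zero hc h0 htail hnonneg
  obtain ⟨hb0, hb0o⟩ := mahlerMulPhiSub_zero_ne_zero_and_order_eq_zero hc h0 (a := a)
  exact (convex_convexHull ℝ _).mk_mem_of_le_of_le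
    (mk_one_mem_mahlerNewtonPolygon hb0 (by rwa [hb0o, Rat.cast_zero]))
    (mk_pow_mem_mahlerNewtonPolygon (by omega) hb (by rwa [hbo, Rat.cast_zero])) hx₁
    (hxp.trans (le_self_pow₀ (by exact_mod_cast hp) i.succ_ne_zero))

theorem mahlerNewtonPolygon_mahlerMulPhiSub (hp : 1 ≤ p) (hc : c ≠ 0) (h0 : a 0 = 1)
    (htail : ∀ i, n < i → a i = 0) (hnonneg : ∀ i, 0 ≤ (a i).order) :
    mahlerNewtonPolygon p (n + 1) (mahlerMulPhiSub a c) =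
      Icc 1 (p : ℝ) ×ˢ Ici 0 ∪
        (fun q : ℝ × ℝ => ((p : ℝ) * q.1, q.2)) '' mahlerNewtonPolygon p n a := by
  have hψ : IsLinearMap ℝ fun q : ℝ × ℝ => ((p : ℝ) * q.1, q.2) :=
    ⟨fun q r => by simp [mul_add], fun t q => by simp [mul_left_comm]⟩
  have hp' : (1 : ℝ) ≤ p := by exact_mod_cast hp
  refine (convexHull_min ?_ (convex_Icc_prod_Ici_union
    ((convex_convexHull ℝ _).is_linear_image hψ) hp' ?_ ?_)).antisymm
    (union_subset (Icc_prod_Ici_subset_mahlerNewtonPolygon_mahlerMulPhiSub hp hc h0 htail hnonneg)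
      ?_)
  · rintro ⟨x, y⟩ ⟨i, hi, hb, hx, hy⟩
    simp only at hx hy
    cases i with
    | zero =>
      refine Or.inl ⟨⟨by simp [hx], by simp [hx, hp']⟩, ?_⟩
      exact (Rat.cast_nonneg.2 (order_mahlerMulPhiSub_nonneg hc hnonneg 0)).trans hy
    | succ i =>
      refine Or.inr ⟨((p : ℝ) ^ i, y), ?_, by simp [hx, pow_succ']⟩
      exact mk_pow_mem_mahlerNewtonPolygon_of_mahlerMulPhiSub hp hc h0 htail hnonneg hb hy
  · rintro _ ⟨⟨x, y⟩, hq, rfl⟩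
    obtain ⟨hx, hy⟩ := mahlerNewtonPolygon_subset_Ici_prod_Ici hp hnonneg hq
    exact ⟨show (p : ℝ) ≤ p * x from le_mul_of_one_le_right (Nat.cast_nonneg p) hx, hy⟩
  · intro y hy
    exact ⟨(1, y), mk_one_mem_mahlerNewtonPolygon (by simp [h0]) (by simpa [h0] using hy),
      by simp⟩
  · rw [hψ.image_convexHull]
    refine convexHull_min ?_ (convex_convexHull ℝ _)
    rintro _ ⟨⟨x, y⟩, ⟨i, hi, ha, hx, hy⟩, rfl⟩
    simp only at hx hy
    rw [hx]
    show ((p : ℝ) * p ^ i, y) ∈ _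
    rw [← pow_succ']
    exact mk_pow_succ_mem_mahlerNewtonPolygon_mahlerMulPhiSub hp hc h0 htail hnonneg hi ha hy

theorem eq_zero_of_mem_mahlerSlopeArgmin_mahlerMulPhiSub (hp : 1 < p) (hc : c ≠ 0)
    (h0 : a 0 = 1) (hnonneg : ∀ i, 0 ≤ (a i).order) {s : ℚ} (hs : s < 0) {i : ℕ}
    (hi : i ∈ mahlerSlopeArgmin p (n + 1) (mahlerMulPhiSub a c) s) : i = 0 := by
  obtain ⟨-, -, hmin⟩ := hi
  obtain ⟨hb0, hb0o⟩ := mahlerMulPhiSub_zero_ne_zero_and_order_eq_zero hc h0 (a := a)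
  have h := hmin 0 (Nat.zero_le _) hb0
  rw [hb0o] at h
  by_contra hi0
  have hpi : 1 < (p : ℚ) ^ i := one_lt_pow₀ (by exact_mod_cast hp) hi0
  nlinarith [order_mahlerMulPhiSub_nonneg hc hnonneg i]

theorem mahlerSlopeMult_mahlerMulPhiSub_zero_ne_zero (hc : c ≠ 0) (h0 : a 0 = 1)
    (htail : ∀ i, n < i → a i = 0) (hnonneg : ∀ i, 0 ≤ (a i).order) :
    mahlerSlopeMult p (n + 1) (mahlerMulPhiSub a c) 0 ≠ 0 := by
  obtain ⟨i, hi, hb, hbo⟩ := exists_mahlerMulPhiSub_succ_order_eq_zero hc h0 htail hnonneg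
  obtain ⟨hb0, hb0o⟩ := mahlerMulPhiSub_zero_ne_zero_and_order_eq_zero hc h0 (a := a)
  have hmem : ∀ j ≤ n + 1, mahlerMulPhiSub a c j ≠ 0 → (mahlerMulPhiSub a c j).order = 0 →
      j ∈ mahlerSlopeArgmin p (n + 1) (mahlerMulPhiSub a c) 0 := fun j hj hbj hbjo =>
    ⟨hj, hbj, fun k _ _ => by simpa [hbjo] using order_mahlerMulPhiSub_nonneg hc hnonneg k⟩
  exact mahlerSlopeMult_ne_zero_iff.2
    ⟨0, hmem 0 (Nat.zero_le _) hb0 hb0o, i + 1, hmem _ (by omega) hb hbo, i.succ_pos⟩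

theorem order_mahlerMulPhiSub_succ_of_mem_mahlerSlopeArgmin (hp : 1 < p) (hc : c ≠ 0)
    (htail : ∀ i, n < i → a i = 0) {t : ℚ} (ht : 0 < t) {j : ℕ}
    (hj : j ∈ mahlerSlopeArgmin p n a t) :
    mahlerMulPhiSub a c (j + 1) ≠ 0 ∧ (mahlerMulPhiSub a c (j + 1)).order = (a j).order := by
  obtain ⟨-, ha, hmin⟩ := hj
  have hlt : (a j).orderTop < (a (j + 1)).orderTop := by
    by_cases ha₁ : a (j + 1) = 0
    · simpa [ha₁] using ha
    · have h := hmin (j + 1) (not_lt.1 (ha₁ ∘ htail _)) ha₁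
      have hpj : t * (p : ℚ) ^ j < t * (p : ℚ) ^ (j + 1) :=
        mul_lt_mul_of_pos_left (pow_lt_pow_right₀ (by exact_mod_cast hp) j.lt_succ_self) ht
      rw [← order_eq_orderTop_of_ne_zero ha, ← order_eq_orderTop_of_ne_zero ha₁]
      exact_mod_cast (by linarith : (a j).order < (a (j + 1)).order)
  exact orderTop_eq_coe_iff.1 ((orderTop_mahlerMulPhiSub_succ_of_lt hc hlt).trans
    (order_eq_orderTop_of_ne_zero ha).symm)

theorem exists_order_sub_le_order_mahlerMulPhiSub (hp : 1 < p) (hc : c ≠ 0) (h0 : a 0 = 1)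
    (htail : ∀ i, n < i → a i = 0) {s : ℚ} (hs : 0 < s) {i : ℕ}
    (hb : mahlerMulPhiSub a c i ≠ 0) :
    ∃ j ≤ n, a j ≠ 0 ∧ (a j).order - p * s * (p : ℚ) ^ j ≤
      (mahlerMulPhiSub a c i).order - s * (p : ℚ) ^ i ∧
      ((a j).order - p * s * (p : ℚ) ^ j = (mahlerMulPhiSub a c i).order - s * (p : ℚ) ^ i →
        i = j + 1) := by
  have hps : ∀ j, s * (p : ℚ) ^ j < p * s * (p : ℚ) ^ j := fun j => by
    have hsj : 0 < s * (p : ℚ) ^ j := by positivity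
    linarith [mul_lt_mul_of_pos_right (show (1 : ℚ) < p by exact_mod_cast hp) hsj]
  cases i with
  | zero =>
    obtain ⟨-, hb0o⟩ := mahlerMulPhiSub_zero_ne_zero_and_order_eq_zero hc h0 (a := a)
    refine ⟨0, Nat.zero_le n, by simp [h0], ?_⟩
    have := hps 0
    simp only [h0, order_one, hb0o, pow_zero] at this ⊢
    exact ⟨by linarith, fun h => by linarith⟩
  | succ i =>
    have hmin := min_orderTop_le_orderTop_mahlerMulPhiSub_succ (a := a) hc i
    rw [← order_eq_orderTop_of_ne_zero hb, min_le_iff, orderTop_le_coe_iff,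
      orderTop_le_coe_iff] at hmin
    rcases hmin with ⟨ha, hle⟩ | ⟨ha, hle⟩
    · refine ⟨i, not_lt.1 (ha ∘ htail i), ha, ?_, fun _ => rfl⟩
      rw [pow_succ]
      linarith
    · refine ⟨i + 1, not_lt.1 (ha ∘ htail _), ha, ?_, fun h => ?_⟩ <;> linarith [hps (i + 1)]

theorem mahlerSlopeArgmin_mahlerMulPhiSub_of_pos (hp : 1 < p) (hc : c ≠ 0) (h0 : a 0 = 1)
    (htail : ∀ i, n < i → a i = 0) {s : ℚ} (hs : 0 < s) :
    mahlerSlopeArgmin p (n + 1) (mahlerMulPhiSub a c) s =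
      (· + 1) '' mahlerSlopeArgmin p n a (p * s) := by
  have hedge : ∀ {j}, j ∈ mahlerSlopeArgmin p n a (p * s) → mahlerMulPhiSub a c (j + 1) ≠ 0 ∧
      (mahlerMulPhiSub a c (j + 1)).order - s * (p : ℚ) ^ (j + 1) =
        (a j).order - p * s * (p : ℚ) ^ j := fun hj => by
    obtain ⟨hb, hbo⟩ := order_mahlerMulPhiSub_succ_of_mem_mahlerSlopeArgmin hp hc htail
      (by positivity) hj
    exact ⟨hb, by rw [hbo, pow_succ]; ring⟩
  obtain ⟨k, hk⟩ := mahlerSlopeArgmin_nonempty (p := p) (n := n) (a := a) (by simp [h0]) (p * s)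
  ext i
  constructor
  · rintro ⟨hi, hb, hmin⟩
    obtain ⟨j, hj, ha, hle, heq⟩ := exists_order_sub_le_order_mahlerMulPhiSub hp hc h0 htail hs hb
    have hik := hmin (k + 1) (by have := hk.1; omega) (hedge hk).1
    rw [(hedge hk).2] at hik
    have hkj := hk.2.2 j hj ha
    obtain rfl := heq (by linarith)
    exact ⟨j, ⟨hj, ha, fun l hl hal => by linarith [hk.2.2 l hl hal]⟩, rfl⟩
  · rintro ⟨j, hj, rfl⟩
    refine ⟨Nat.succ_le_succ hj.1, (hedge hj).1, fun i hi hb => ?_⟩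
    obtain ⟨l, hl, hal, hle, -⟩ := exists_order_sub_le_order_mahlerMulPhiSub hp hc h0 htail hs hb
    rw [(hedge hj).2]
    linarith [hj.2.2 l hl hal]

theorem mahlerSlopeMult_mahlerMulPhiSub_ne_zero_iff (hp : 1 < p) (hc : c ≠ 0) (h0 : a 0 = 1)
    (htail : ∀ i, n < i → a i = 0) (hnonneg : ∀ i, 0 ≤ (a i).order)
    (hslopes : ∀ s : ℚ, s < 0 → mahlerSlopeMult p n a s = 0) (s : ℚ) :
    mahlerSlopeMult p (n + 1) (mahlerMulPhiSub a c) s ≠ 0 ↔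
      s = 0 ∨ mahlerSlopeMult p n a (p * s) ≠ 0 := by
  rcases lt_trichotomy s 0 with hs | rfl | hs
  · have hb : mahlerSlopeMult p (n + 1) (mahlerMulPhiSub a c) s = 0 := by
      by_contra h
      obtain ⟨i, -, j, hj, hij⟩ := mahlerSlopeMult_ne_zero_iff.1 h
      have := eq_zero_of_mem_mahlerSlopeArgmin_mahlerMulPhiSub hp hc h0 hnonneg hs hj
      omega
    simp [hb, hs.ne, hslopes _ (mul_neg_of_pos_of_neg (by positivity : (0 : ℚ) < p) hs)]
  · simpa using mahlerSlopeMult_mahlerMulPhiSub_zero_ne_zero hc h0 htail hnonneg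
  · rw [mahlerSlopeMult_ne_zero_iff, mahlerSlopeMult_ne_zero_iff,
      mahlerSlopeArgmin_mahlerMulPhiSub_of_pos hp hc h0 htail hs]
    simp [hs.ne']

end Mahler

theorem newtonPolygon_mul_phi_sub_c_general (p n : ℕ) (hp : 2 ≤ p) (a : ℕ → HahnSeries ℚ ℂ)
    (h0 : a 0 = 1) (htail : ∀ i, n < i → a i = 0)
    (hslopes : ∀ s : ℚ, s < 0 → mahlerSlopeMult p n a s = 0)
    (c : ℂ) (hc : c ≠ 0) :
    let b : ℕ → HahnSeries ℚ ℂ := fun i => (if i = 0 then 0 else a (i - 1)) - c • a i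
    mahlerNewtonPolygon p (n + 1) b =
        (Set.Icc (1 : ℝ) (p : ℝ) ×ˢ Set.Ici (((a 0).order : ℝ))) ∪
          ((fun q : ℝ × ℝ => ((p : ℝ) * q.1, q.2)) '' mahlerNewtonPolygon p n a) ∧
      ∀ s : ℚ, mahlerSlopeMult p (n + 1) b s ≠ 0 ↔
        s = 0 ∨ mahlerSlopeMult p n a ((p : ℚ) * s) ≠ 0 := by
  have hp1 : 1 < p := by omega
  have hnonneg : ∀ i, 0 ≤ (a i).order := fun i => by
    rcases le_or_gt i n with hi | hi
    · exact order_nonneg_of_slopes_nonneg hp1 h0 hslopes hi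
    · simp [htail i hi]
  refine ⟨?_, mahlerSlopeMult_mahlerMulPhiSub_ne_zero_iff hp1 hc h0 htail hnonneg hslopes⟩
  rw [h0, order_one, Rat.cast_zero]
  exact mahlerNewtonPolygon_mahlerMulPhiSub hp1.le hc h0 htail hnonneg

/-- Let `L = Σ_{i=0}^n a_i(z) φ_p^i` have all slopes nonnegative and `a_0 = 1`, and let
`c ∈ ℂ^×`. Then the Newton polygon of `L·(φ_p − c) = Σ_{i=0}^{n+1} b_i φ_p^i` (with
`b_0 = −c·a_0`, `b_i = a_{i−1} − c·a_i`, `b_{n+1} = a_n`) equals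
`([1,p] × [val_z(a_0), ∞)) ∪ ψ(N(L))` where `ψ(x,y) = (px, y)`; consequently the slopes
of `L·(φ_p − c)` are exactly `p^{−1}·S(L) ∪ {0}`. -/
theorem newtonPolygon_mul_phi_sub_c (p n : ℕ) (hp : 2 ≤ p) (a : ℕ → HahnSeries ℚ ℂ)
    (h0 : a 0 = 1) (hn : a n ≠ 0) (htail : ∀ i, n < i → a i = 0)
    (hslopes : ∀ s : ℚ, s < 0 → mahlerSlopeMult p n a s = 0)
    (c : ℂ) (hc : c ≠ 0) :
    let b : ℕ → HahnSeries ℚ ℂ := fun i => (if i = 0 then 0 else a (i - 1)) - c • a i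
    mahlerNewtonPolygon p (n + 1) b =
        (Set.Icc (1 : ℝ) (p : ℝ) ×ˢ Set.Ici (((a 0).order : ℝ))) ∪
          ((fun q : ℝ × ℝ => ((p : ℝ) * q.1, q.2)) '' mahlerNewtonPolygon p n a) ∧
      ∀ s : ℚ, mahlerSlopeMult p (n + 1) b s ≠ 0 ↔
        s = 0 ∨ mahlerSlopeMult p n a ((p : ℚ) * s) ≠ 0 :=
  newtonPolygon_mul_phi_sub_c_general p n hp a h0 htail hslopes c hc
end
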